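/- arXiv:2010.04523 — 7 statements merged into one kernel-verified Lean document; each statement's English description precedes it below -/
import Mathlib

section
/- Let X be a complex Banach space and T ∈ B(X) with σ(T) ⊆ the closed unit disk. Suppose there exist m ≥ 1 and C > 0 such that for all r > 1, x ∈ X, x* ∈ X*: ∫₀^{2π} |⟨R(re^{it},T)^{m+1}x, x*⟩| dt ≤ C/((r+1)(r−1)^m) ‖x‖ ‖x*‖. Then T is power bounded; more precisely ‖Tⁿ‖ ≤ 2^m m! C e / π for all n ∈ ℕ. -/
/-!
For `r > 1` the Riesz–Dunford formula gives `2πi Tⁿ = ∮_{|z|=r} zⁿ R(z,T) dz`. Since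
`d/dz R(z,T)^j = -j R(z,T)^{j+1}`, integrating by parts `m` times turns this into
`2πi (n+m choose m) Tⁿ = ∮_{|z|=r} z^{n+m} R(z,T)^{m+1} dz`, and `(GFS)_m` bounds the weak form of
the right-hand side by `r^{n+m+1} C / ((r+1)(r-1)^m) ‖x‖ ‖x*‖`. For `r = 1 + 1/n` one has
`r^n ≤ e` and `(r-1)^{-m} = n^m`, and the factor `n^m` is absorbed by `(n+m choose m) ≥ n^m / m!`.
-/

open Complex MeasureTheory Metric Filter Bornology
open scoped Real Topology

section CircleIntegral

variable {E F : Type*} [NormedAddCommGroup E] [NormedSpace ℂ E]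
  [NormedAddCommGroup F] [NormedSpace ℂ F]

theorem ContinuousLinearMap.circleIntegrable_comp (L : E →L[ℂ] F) {f : ℂ → E} {c : ℂ} {R : ℝ}
    (hf : CircleIntegrable f c R) : CircleIntegrable (fun z ↦ L (f z)) c R :=
  ⟨L.integrable_comp hf.1, L.integrable_comp hf.2⟩

theorem ContinuousLinearMap.circleIntegral_comp_comm [CompleteSpace E] [CompleteSpace F]
    (L : E →L[ℂ] F) {f : ℂ → E} {c : ℂ} {R : ℝ} (hf : CircleIntegrable f c R) :
    (∮ z in C(c, R), L (f z)) = L (∮ z in C(c, R), f z) := by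
  simp only [circleIntegral, ← L.map_smul]
  exact L.intervalIntegral_comp_comm hf.out

theorem circleIntegral.norm_integral_le_integral_norm {f : ℂ → E} {c : ℂ} {R : ℝ} (hR : 0 ≤ R) :
    ‖∮ z in C(c, R), f z‖ ≤ R * ∫ θ in (0 : ℝ)..2 * π, ‖f (circleMap c R θ)‖ := by
  refine (intervalIntegral.norm_integral_le_integral_norm Real.two_pi_pos.le).trans_eq ?_
  simp only [norm_smul, deriv_circleMap, norm_mul, norm_circleMap_zero, Complex.norm_I, mul_one,
    abs_of_nonneg hR]
  exact intervalIntegral.integral_const_mul _ _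

theorem circleIntegral.norm_integral_pow_smul_le {f : ℂ → E} {R : ℝ} (hR : 0 ≤ R) (q : ℕ) :
    ‖∮ z in C(0, R), z ^ q • f z‖
      ≤ R ^ (q + 1) * ∫ θ in (0 : ℝ)..2 * π, ‖f (circleMap 0 R θ)‖ := by
  refine (circleIntegral.norm_integral_le_integral_norm hR).trans_eq ?_
  simp only [norm_smul, norm_pow, norm_circleMap_zero, abs_of_nonneg hR,
    intervalIntegral.integral_const_mul]
  ring

theorem circleIntegral_eq_of_tendsto_smul_cobounded [CompleteSpace E] {f : ℂ → E} {y : E}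
    {r : ℝ} (hr : 0 < r) (hd : ∀ z : ℂ, r ≤ ‖z‖ → DifferentiableAt ℂ f z)
    (hy : Tendsto (fun z ↦ z • f z) (cobounded ℂ) (𝓝 y)) :
    (∮ z in C(0, r), f z) = (2 * π * I) • y := by
  -- The integral does not depend on the radius, and on large circles `f z = z⁻¹ • (y + o(1))`.
  rw [← sub_eq_zero, ← norm_le_zero_iff]
  refine le_of_forall_gt_imp_ge_of_dense fun ε hε ↦ ?_
  obtain ⟨M, hM⟩ : ∃ M, ∀ z : ℂ, M ≤ ‖z‖ → ‖z • f z - y‖ < ε / (2 * π) := by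
    have := (atTop_basis.cobounded_of_norm.tendsto_iff nhds_basis_ball).1 hy _
      (div_pos hε Real.two_pi_pos)
    simpa [dist_eq_norm] using this
  set R := max r M
  have hR : 0 < R := hr.trans_le (le_max_left _ _)
  have hcont : ContinuousOn f {z | r ≤ ‖z‖} := fun z hz ↦
    (hd z hz).continuousAt.continuousWithinAt
  have hsphere : ∀ z ∈ sphere (0 : ℂ) R, r ≤ ‖z‖ := fun z hz ↦ by
    rw [mem_sphere_zero_iff_norm.1 hz]; exact le_max_left _ _
  calc ‖(∮ z in C(0, r), f z) - (2 * π * I) • y‖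
      = ‖∮ z in C(0, R), z⁻¹ • (z • f z - y)‖ := by
        have hne : ∀ z ∈ sphere (0 : ℂ) R, z ≠ 0 := fun z hz ↦
          ne_zero_of_mem_sphere hR.ne' ⟨z, hz⟩
        have hsplit : Set.EqOn (fun z ↦ z⁻¹ • (z • f z - y)) (fun z ↦ f z - z⁻¹ • y)
            (sphere 0 R) := fun z hz ↦ by
          simp only [smul_sub, inv_smul_smul₀ (hne z hz)]
        rw [circleIntegral.integral_congr hR.le hsplit,
          circleIntegral.integral_sub ((hcont.mono hsphere).circleIntegrable hR.le)
            (g := fun z ↦ z⁻¹ • y)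
            (((continuousOn_inv₀.mono hne).smul continuousOn_const).circleIntegrable hR.le),
          circleIntegral.integral_smul_const,
          show (∮ z in C(0, R), z⁻¹) = 2 * π * I by
            simpa using circleIntegral.integral_sub_center_inv 0 hR.ne',
          circleIntegral_eq_of_differentiable_on_annulus_off_countable hr (le_max_left _ _)
            Set.countable_empty (hcont.mono fun z hz ↦ by simpa using hz.2)
            fun z hz ↦ hd z (not_le.1 (mem_closedBall_zero_iff.not.1 hz.1.2)).le]
    _ ≤ 2 * π * R * (R⁻¹ * (ε / (2 * π))) := by
        refine circleIntegral.norm_integral_le_of_norm_le_const hR.le fun z hz ↦ ?_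
        rw [mem_sphere_zero_iff_norm] at hz
        rw [norm_smul, norm_inv, hz]
        exact mul_le_mul_of_nonneg_left (hM z (hz ▸ le_max_right _ _)).le (by positivity)
    _ = ε := by field_simp

end CircleIntegral

namespace spectrum

section

variable {R A : Type*} [CommRing R] [Ring A] [Algebra R A] {a : A} {z : R}

theorem algebraMap_sub_mul_resolvent (hz : z ∈ resolventSet R a) :
    (algebraMap R A z - a) * resolvent a z = 1 := by
  rw [resolvent_eq hz]
  exact hz.mul_val_inv

theorem smul_resolvent_eq (hz : z ∈ resolventSet R a) :
    z • resolvent a z = 1 + a * resolvent a z := by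
  rw [← algebraMap_sub_mul_resolvent hz, sub_mul, Algebra.smul_def]
  abel

end

section

variable {𝕜 A : Type*} [NontriviallyNormedField 𝕜] [NormedRing A] [NormedAlgebra 𝕜 A]
  [CompleteSpace A] {a : A}

theorem hasDerivAt_resolvent_pow {z : 𝕜} (hz : z ∈ resolventSet 𝕜 a) (j : ℕ) :
    HasDerivAt (fun w ↦ resolvent a w ^ j) (-((j : 𝕜) • resolvent a z ^ (j + 1))) z := by
  induction j with
  | zero => simpa using hasDerivAt_const z (1 : A)
  | succ j ih =>
    simp only [pow_succ]
    convert ih.fun_mul (hasDerivAt_resolvent_const_left hz) using 1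
    simp only [mul_neg, ← pow_succ, ← pow_add]
    rw [neg_mul, smul_mul_assoc, ← pow_succ]
    push_cast
    module

theorem tendsto_smul_resolvent_cobounded (a : A) :
    Tendsto (fun z ↦ z • resolvent a z) (cobounded 𝕜) (𝓝 1) := by
  have hres : ∀ᶠ z in cobounded 𝕜, z ∈ resolventSet 𝕜 a := by
    simpa [spectrum] using isBounded_def.1 (isBounded (𝕜 := 𝕜) a)
  have := ((continuous_const_mul a).tendsto 0).comp (resolvent_tendsto_cobounded (𝕜 := 𝕜) a)
  rw [mul_zero] at this
  simpa using (this.const_add 1).congr' (hres.mono fun z hz ↦ (smul_resolvent_eq hz).symm)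

end

theorem mem_resolventSet_of_subset_ball {𝕜 A : Type*} [NormedField 𝕜] [Ring A] [Algebra 𝕜 A]
    {a : A} {r : ℝ} (hσ : spectrum 𝕜 a ⊆ ball 0 r) {z : 𝕜} (hz : r ≤ ‖z‖) :
    z ∈ resolventSet 𝕜 a :=
  not_not.1 fun h ↦ (mem_ball_zero_iff.1 (hσ h)).not_ge hz

variable {A : Type*} [NormedRing A] [NormedAlgebra ℂ A] [CompleteSpace A] {a : A} {r : ℝ}

theorem differentiableAt_pow_smul_resolvent_pow (hσ : spectrum ℂ a ⊆ ball 0 r) {z : ℂ}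
    (hz : r ≤ ‖z‖) (p j : ℕ) : DifferentiableAt ℂ (fun w ↦ w ^ p • resolvent a w ^ j) z :=
  (differentiableAt_pow p).smul
    (hasDerivAt_resolvent_pow (mem_resolventSet_of_subset_ball hσ hz) j).differentiableAt

theorem continuousOn_pow_smul_resolvent_pow (hσ : spectrum ℂ a ⊆ ball 0 r) (p j : ℕ) :
    ContinuousOn (fun z : ℂ ↦ z ^ p • resolvent a z ^ j) (sphere 0 r) := fun _ hz ↦
  (differentiableAt_pow_smul_resolvent_pow hσ (mem_sphere_zero_iff_norm.1 hz).ge p j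
    ).continuousAt.continuousWithinAt

theorem circleIntegral_resolvent (hσ : spectrum ℂ a ⊆ ball 0 r) (hr : 0 < r) :
    (∮ z in C(0, r), resolvent a z) = (2 * π * I) • (1 : A) :=
  circleIntegral_eq_of_tendsto_smul_cobounded hr
    (fun _ hz ↦ (hasDerivAt_resolvent_const_left
      (mem_resolventSet_of_subset_ball hσ hz)).differentiableAt)
    (tendsto_smul_resolvent_cobounded a)

theorem circleIntegral_pow_smul_resolvent (hσ : spectrum ℂ a ⊆ ball 0 r) (hr : 0 < r) (n : ℕ) :
    (∮ z in C(0, r), z ^ n • resolvent a z) = (2 * π * I) • a ^ n := by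
  induction n with
  | zero => simpa using circleIntegral_resolvent hσ hr
  | succ n ih =>
    have hsplit : Set.EqOn (fun z : ℂ ↦ z ^ (n + 1) • resolvent a z)
        (fun z ↦ z ^ n • (1 : A) + ContinuousLinearMap.mul ℂ A a (z ^ n • resolvent a z))
        (sphere 0 r) := fun z hz ↦ by
      simp only [pow_succ, mul_smul, ContinuousLinearMap.mul_apply', mul_smul_comm,
        ← smul_add, smul_resolvent_eq (mem_resolventSet_of_subset_ball hσ
          (mem_sphere_zero_iff_norm.1 hz).ge)]
    have hmonomial : Continuous fun z : ℂ ↦ z ^ n • (1 : A) :=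
      (continuous_pow n).smul continuous_const
    have hpoly : (∮ z in C(0, r), z ^ n • (1 : A)) = 0 :=
      circleIntegral_eq_zero_of_differentiable_on_off_countable hr.le Set.countable_empty
        hmonomial.continuousOn fun z _ ↦ (differentiableAt_pow n).smul_const 1
    have hint : CircleIntegrable (fun z ↦ z ^ n • resolvent a z) 0 r := by
      simpa using (continuousOn_pow_smul_resolvent_pow hσ n 1).circleIntegrable hr.le
    rw [circleIntegral.integral_congr hr.le hsplit, circleIntegral.integral_add
      (hmonomial.continuousOn.circleIntegrable hr.le)
      ((ContinuousLinearMap.mul ℂ A a).circleIntegrable_comp hint), hpoly, zero_add,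
      ContinuousLinearMap.circleIntegral_comp_comm _ hint, ih, map_smul,
      ContinuousLinearMap.mul_apply', ← pow_succ']

theorem add_one_smul_circleIntegral_pow_smul_resolvent_pow (hσ : spectrum ℂ a ⊆ ball 0 r)
    (hr : 0 ≤ r) (p j : ℕ) :
    ((p : ℂ) + 1) • (∮ z in C(0, r), z ^ p • resolvent a z ^ j)
      = (j : ℂ) • ∮ z in C(0, r), z ^ (p + 1) • resolvent a z ^ (j + 1) := by
  have hderiv : ∀ z ∈ sphere (0 : ℂ) r,
      HasDerivWithinAt (fun w ↦ w ^ (p + 1) • resolvent a w ^ j)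
      (((p : ℂ) + 1) • (z ^ p • resolvent a z ^ j)
        - (j : ℂ) • (z ^ (p + 1) • resolvent a z ^ (j + 1))) (sphere 0 r) z := fun z hz ↦ by
    have hz' := mem_resolventSet_of_subset_ball hσ (mem_sphere_zero_iff_norm.1 hz).ge
    refine (((hasDerivAt_pow (p + 1) z).fun_smul
      (hasDerivAt_resolvent_pow hz' j)).congr_deriv ?_).hasDerivWithinAt
    simp only [Nat.add_sub_cancel]
    push_cast
    module
  have hint : ∀ q i : ℕ, ∀ c : ℂ,
      CircleIntegrable (fun z ↦ c • (z ^ q • resolvent a z ^ i)) 0 r := fun q i c ↦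
    ((continuousOn_pow_smul_resolvent_pow hσ q i).const_smul c).circleIntegrable hr
  have := circleIntegral.integral_eq_zero_of_hasDerivWithinAt hr hderiv
  rwa [circleIntegral.integral_sub (hint _ _ _) (hint _ _ _), circleIntegral.integral_smul,
    circleIntegral.integral_smul, sub_eq_zero] at this

theorem choose_smul_circleIntegral_pow_smul_resolvent (hσ : spectrum ℂ a ⊆ ball 0 r)
    (hr : 0 ≤ r) (n m : ℕ) :
    ((n + m).choose m : ℂ) • (∮ z in C(0, r), z ^ n • resolvent a z)
      = ∮ z in C(0, r), z ^ (n + m) • resolvent a z ^ (m + 1) := by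
  induction m with
  | zero => simp
  | succ m ih =>
    have hibp := add_one_smul_circleIntegral_pow_smul_resolvent_pow hσ hr (n + m) (m + 1)
    have hchoose : ((m : ℂ) + 1) * ((n + m + 1).choose (m + 1) : ℂ)
        = ((n + m : ℕ) + 1) * ((n + m).choose m : ℂ) := by
      rw [mul_comm]
      exact_mod_cast (Nat.add_one_mul_choose_eq (n + m) m).symm
    refine smul_right_injective A (Nat.cast_add_one_ne_zero (R := ℂ) m) ?_
    dsimp only
    rw [← add_assoc, smul_smul, hchoose, mul_smul, ih, hibp, Nat.cast_succ]

theorem circleIntegral_pow_smul_resolvent_pow (hσ : spectrum ℂ a ⊆ ball 0 r) (hr : 0 < r)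
    (n m : ℕ) :
    (∮ z in C(0, r), z ^ (n + m) • resolvent a z ^ (m + 1))
      = (2 * π * I * (n + m).choose m) • a ^ n := by
  rw [← choose_smul_circleIntegral_pow_smul_resolvent hσ hr.le,
    circleIntegral_pow_smul_resolvent hσ hr, smul_smul, mul_comm]

end spectrum

theorem pow_div_factorial_le_choose_add (n m : ℕ) :
    (n : ℝ) ^ m / m.factorial ≤ (n + m).choose m :=
  calc (n : ℝ) ^ m / m.factorial ≤ ((n + m + 1 - m : ℕ) : ℝ) ^ m / m.factorial := by
        gcongr
        exact_mod_cast Nat.le_sub_of_add_le (by omega)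
    _ ≤ (n + m).choose m := Nat.pow_le_choose m (n + m)

theorem one_add_inv_pow_div_le {n : ℕ} (hn : 1 ≤ n) (m : ℕ) :
    (1 + (n : ℝ)⁻¹) ^ (n + m + 1) / ((1 + (n : ℝ)⁻¹ + 1) * (1 + (n : ℝ)⁻¹ - 1) ^ m)
      ≤ Real.exp 1 * 2 ^ m * n ^ m := by
  have hn' : (1 : ℝ) ≤ n := by exact_mod_cast hn
  have hinv : (n : ℝ)⁻¹ ≤ 1 := inv_le_one_of_one_le₀ hn'
  have hnum : (1 + (n : ℝ)⁻¹) ^ (n + m + 1) ≤ Real.exp 1 * 2 ^ (m + 1) := by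
    rw [add_assoc, pow_add]
    gcongr
    · exact Real.one_add_inv_pow_le_exp
    · linarith
  rw [add_sub_cancel_left, inv_pow, div_le_iff₀ (by positivity)]
  calc (1 + (n : ℝ)⁻¹) ^ (n + m + 1) ≤ Real.exp 1 * 2 ^ (m + 1) := hnum
    _ ≤ Real.exp 1 * 2 ^ m * n ^ m * ((1 + (n : ℝ)⁻¹ + 1) * ((n : ℝ) ^ m)⁻¹) := by
      rw [mul_comm (1 + (n : ℝ)⁻¹ + 1), ← mul_assoc, mul_assoc _ ((n : ℝ) ^ m),
        mul_inv_cancel₀ (by positivity), mul_one, pow_succ, mul_assoc]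
      gcongr
      linarith [inv_nonneg.2 (Nat.cast_nonneg (α := ℝ) n)]

section Operator

variable {X : Type*} [NormedAddCommGroup X] [NormedSpace ℂ X] [CompleteSpace X]

theorem norm_pow_le_of_integral_norm_resolvent_pow_le {T : X →L[ℂ] X} {r B : ℝ}
    (hσ : spectrum ℂ T ⊆ ball 0 r) (hr : 0 < r) (hB : 0 ≤ B) {m : ℕ}
    (hint : ∀ (x : X) (x' : StrongDual ℂ X),
      ∫ θ in (0 : ℝ)..2 * π, ‖x' ((resolvent T (circleMap 0 r θ) ^ (m + 1)) x)‖
        ≤ B * ‖x‖ * ‖x'‖) (n : ℕ) :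
    ‖T ^ n‖ ≤ r ^ (n + m + 1) * B / (2 * π * (n + m).choose m) := by
  have hden : 0 < 2 * π * (n + m).choose m :=
    mul_pos Real.two_pi_pos (Nat.cast_pos.2 (Nat.choose_pos (Nat.le_add_left m n)))
  refine ContinuousLinearMap.opNorm_le_bound _ (by positivity) fun x ↦
    NormedSpace.norm_le_dual_bound ℂ _ (by positivity) fun x' ↦ ?_
  set L : (X →L[ℂ] X) →L[ℂ] ℂ := x'.comp (ContinuousLinearMap.apply ℂ X x)
  have hcauchy : (2 * π * I * (n + m).choose m) * x' ((T ^ n) x)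
      = ∮ z in C(0, r), z ^ (n + m) • x' ((resolvent T z ^ (m + 1)) x) := by
    have := congrArg L (spectrum.circleIntegral_pow_smul_resolvent_pow hσ hr n m)
    rw [← L.circleIntegral_comp_comm
      ((spectrum.continuousOn_pow_smul_resolvent_pow hσ _ _).circleIntegrable hr.le)] at this
    simpa [L] using this.symm
  have hcoeff : ‖(2 * π * I * (n + m).choose m : ℂ)‖ = 2 * π * (n + m).choose m := by
    simp [Real.pi_pos.le]
  rw [mul_assoc, div_mul_eq_mul_div, le_div_iff₀ hden, mul_comm,
    ← hcoeff, ← norm_mul, hcauchy]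
  calc ‖∮ z in C(0, r), z ^ (n + m) • x' ((resolvent T z ^ (m + 1)) x)‖
      ≤ r ^ (n + m + 1) * (B * ‖x‖ * ‖x'‖) :=
        (circleIntegral.norm_integral_pow_smul_le hr.le _).trans
          (mul_le_mul_of_nonneg_left (hint x x') (by positivity))
    _ = r ^ (n + m + 1) * B * (‖x‖ * ‖x'‖) := by ring

end Operator

theorem stmt2_general {X : Type*} [NormedAddCommGroup X] [NormedSpace ℂ X] [CompleteSpace X]
    (T : X →L[ℂ] X) (hσ : spectrum ℂ T ⊆ closedBall 0 1)
    (m : ℕ) (C : ℝ) (hC : 0 < C)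
    (hGFS : ∀ r : ℝ, 1 < r → ∀ (x : X) (x' : StrongDual ℂ X),
      ∫ t in (0:ℝ)..(2*π), ‖x' ((resolvent T ((r : ℂ) * exp (t * I)) ^ (m+1)) x)‖
        ≤ C / ((r+1)*(r-1)^m) * ‖x‖ * ‖x'‖) :
    ∀ n : ℕ, 1 ≤ n → ‖T ^ n‖ ≤ 2^m * m.factorial * C * Real.exp 1 / π := by
  intro n hn
  set r : ℝ := 1 + (n : ℝ)⁻¹
  have hr : 1 < r := lt_add_of_pos_right 1 (by positivity)
  have hpow := norm_pow_le_of_integral_norm_resolvent_pow_le (m := m)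
    (B := C / ((r + 1) * (r - 1) ^ m)) (hσ.trans (closedBall_subset_ball hr)) (by positivity)
    (div_nonneg hC.le (by have := sub_pos.2 hr; positivity))
    (fun x x' ↦ by simpa only [circleMap_zero] using hGFS r hr x x') n
  have hchoose : 0 < (n : ℝ) ^ m / m.factorial := by
    have : (0 : ℝ) < n := by exact_mod_cast hn
    positivity
  calc ‖T ^ n‖
      ≤ C * (r ^ (n + m + 1) / ((r + 1) * (r - 1) ^ m)) / (2 * π * (n + m).choose m) := by
        convert hpow using 2; ring
    _ ≤ C * (Real.exp 1 * 2 ^ m * n ^ m) / (2 * π * (n ^ m / m.factorial)) := by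
        gcongr
        · exact one_add_inv_pow_div_le hn m
        · exact pow_div_factorial_le_choose_add n m
    _ = 2 ^ m * m.factorial * C * Real.exp 1 / (2 * π) := by
        field_simp
    _ ≤ 2 ^ m * m.factorial * C * Real.exp 1 / π := by
        gcongr
        linarith [Real.pi_pos]

/-- The discrete Gomilko–Shi–Feng condition `(GFS)_m` implies power boundedness,
with `‖Tⁿ‖ ≤ 2^m m! C e / π`. -/
theorem stmt2 {X : Type*} [NormedAddCommGroup X] [NormedSpace ℂ X] [CompleteSpace X]
    (T : X →L[ℂ] X) (hσ : spectrum ℂ T ⊆ closedBall 0 1)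
    (m : ℕ) (hm : 1 ≤ m) (C : ℝ) (hC : 0 < C)
    (hGFS : ∀ r : ℝ, 1 < r → ∀ (x : X) (x' : StrongDual ℂ X),
      ∫ t in (0:ℝ)..(2*π), ‖x' ((resolvent T ((r : ℂ) * exp (t * I)) ^ (m+1)) x)‖
        ≤ C / ((r+1)*(r-1)^m) * ‖x‖ * ‖x'‖) :
    ∀ n : ℕ, 1 ≤ n → ‖T ^ n‖ ≤ 2^m * m.factorial * C * Real.exp 1 / π :=
  stmt2_general T hσ m C hC hGFS
end

section
/- Let m ≥ 1 and T ∈ B(X) satisfy (GFS)_m. Then for each 1 ≤ k ≤ m and all r > 1, x ∈ X, x* ∈ X*: ∫₀^{2π}|⟨R(re^{it},T)^{k+1}x,x*⟩|dt ≤ (Cm/k)/((r+1)(r−1)^k) ‖x‖‖x*‖. In particular (GFS)_m implies (GFS)_k for all 1 ≤ k ≤ m. -/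
/-!
Write `R = R(·, T)`. Since `d/ds R(s e^{it})^n = -n e^{it} R(s e^{it})^{n+1}` and `R(z) → 0` as
`|z| → ∞`, integrating along the ray from `r e^{it}` to infinity gives
`|⟨R(r e^{it})^n x, x*⟩| ≤ n ∫_r^∞ |⟨R(s e^{it})^{n+1} x, x*⟩| ds`.
Integrating over `t` and exchanging the integrals, a bound `D / ((s+1)(s-1)^n)` for the exponent
`n + 1` yields, via `∫_r^∞ (s-1)^{-n} ds = (r-1)^{1-n} / (n-1)`, the bound
`D n / (n-1) / ((r+1)(r-1)^{n-1})` for the exponent `n`. Descending from `m + 1` to `k + 1`, the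
factors `(j+1)/j` telescope to `m/k`.
-/

open Complex MeasureTheory Metric Filter Set Topology intervalIntegral Bornology
open scoped Real Interval

lemma hasDerivAt_circleMap_radius (c : ℂ) (s t : ℝ) :
    HasDerivAt (fun s : ℝ => circleMap c s t) (exp (t * I)) s := by
  simpa [circleMap] using ((ofRealCLM.hasDerivAt (x := s)).mul_const (exp (t * I))).const_add c

lemma ContinuousOn.integrableOn_uIoc_prod {E : Type*} [NormedAddCommGroup E] {f : ℝ × ℝ → E}
    {a b c d : ℝ} (hf : ContinuousOn f ([[a, b]] ×ˢ [[c, d]])) :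
    IntegrableOn f (Ι a b ×ˢ Ι c d) :=
  (hf.integrableOn_compact (isCompact_uIcc.prod isCompact_uIcc)).mono_set
    (prod_mono uIoc_subset_uIcc uIoc_subset_uIcc)

lemma MeasureTheory.IntegrableOn.intervalIntegrable_intervalIntegral {E : Type*}
    [NormedAddCommGroup E] [NormedSpace ℝ E] {f : ℝ → ℝ → E} {a b c d : ℝ}
    (hf : IntegrableOn (Function.uncurry f) (Ι a b ×ˢ Ι c d)) :
    IntervalIntegrable (fun x => ∫ y in c..d, f x y) volume a b := by
  rw [IntegrableOn, Measure.volume_eq_prod, ← Measure.prod_restrict] at hf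
  simp_rw [intervalIntegrable_iff, intervalIntegral_eq_integral_uIoc]
  exact hf.integral_prod_left.smul _

lemma integral_sub_zpow_le {j : ℕ} (hj : j ≠ 0) {c r R : ℝ} (hcr : c < r) (hrR : r ≤ R) :
    ∫ s in r..R, (s - c) ^ (-(j + 1 : ℤ)) ≤ ((r - c) ^ j)⁻¹ / j := by
  have hzero : (0 : ℝ) ∉ [[r - c, R - c]] := fun h => by
    rw [uIcc_of_le (by linarith)] at h; linarith [h.1]
  rw [integral_comp_sub_right (fun s => s ^ (-(j + 1 : ℤ))),
    integral_zpow (Or.inr ⟨by omega, hzero⟩), show -(j + 1 : ℤ) + 1 = -j by ring]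
  push_cast
  rw [show (-(j + 1 : ℝ) + 1) = -j by ring, div_neg, ← neg_div, neg_sub, zpow_neg, zpow_natCast]
  have : 0 ≤ (R - c) ^ (-(j : ℤ)) := zpow_nonneg (by linarith) _
  gcongr
  linarith

section

variable {A : Type*} [NormedRing A] [NormedAlgebra ℂ A]

noncomputable def circleNormIntegral (ℓ : StrongDual ℂ A) (a : A) (n : ℕ) (r : ℝ) : ℝ :=
  ∫ t in (0 : ℝ)..2 * π, ‖ℓ (resolvent a (circleMap 0 r t) ^ n)‖

variable {a : A}

lemma circleMap_mem_resolventSet (ha : spectrum ℂ a ⊆ closedBall 0 1) {s : ℝ} (hs : 1 < s)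
    (t : ℝ) : circleMap 0 s t ∈ resolventSet ℂ a := by
  rw [spectrum.mem_resolventSet_iff, ← spectrum.notMem_iff]
  intro h
  have := mem_closedBall_zero_iff.mp (ha h)
  rw [norm_circleMap_zero, abs_of_pos (by linarith)] at this
  linarith

variable [CompleteSpace A]

lemma hasDerivAt_resolvent_pow {z : ℂ} (hz : z ∈ resolventSet ℂ a) (n : ℕ) :
    HasDerivAt (fun w => resolvent a w ^ n) (-(n : ℂ) • resolvent a z ^ (n + 1)) z := by
  induction n with
  | zero => simpa using hasDerivAt_const z (1 : A)
  | succ n ih =>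
    convert ih.fun_mul (spectrum.hasDerivAt_resolvent_const_left hz) using 1
    · simp only [pow_succ]
    · simp only [smul_mul_assoc, mul_neg, ← pow_succ, ← pow_add, Nat.cast_succ]
      module

lemma continuousOn_resolvent_pow (n : ℕ) :
    ContinuousOn (fun z => resolvent a z ^ n) (resolventSet ℂ a) :=
  fun _ hz => (hasDerivAt_resolvent_pow hz n).continuousAt.continuousWithinAt

variable (ha : spectrum ℂ a ⊆ closedBall 0 1) (ℓ : StrongDual ℂ A)
include ha

lemma continuousOn_apply_resolvent_pow_circleMap (n : ℕ) :
    ContinuousOn (fun p : ℝ × ℝ => ℓ (resolvent a (circleMap 0 p.2 p.1) ^ n)) (univ ×ˢ Ioi 1) :=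
  ℓ.continuous.comp_continuousOn <| (continuousOn_resolvent_pow n).comp
    (by fun_prop : Continuous fun p : ℝ × ℝ => circleMap 0 p.2 p.1).continuousOn
    fun p hp => circleMap_mem_resolventSet ha hp.2 p.1

lemma continuous_apply_resolvent_pow_circleMap (n : ℕ) {s : ℝ} (hs : 1 < s) :
    Continuous fun t => ℓ (resolvent a (circleMap 0 s t) ^ n) :=
  ℓ.continuous.comp <| (continuousOn_resolvent_pow n).comp_continuous (continuous_circleMap 0 s)
    (circleMap_mem_resolventSet ha hs)

lemma norm_apply_resolvent_pow_circleMap_le (n : ℕ) {r R : ℝ} (hr : 1 < r) (hrR : r ≤ R)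
    (t : ℝ) :
    ‖ℓ (resolvent a (circleMap 0 r t) ^ n)‖ ≤ ‖ℓ (resolvent a (circleMap 0 R t) ^ n)‖
      + n * ∫ s in r..R, ‖ℓ (resolvent a (circleMap 0 s t) ^ (n + 1))‖ := by
  have hmem : ∀ s ∈ [[r, R]], circleMap 0 s t ∈ resolventSet ℂ a := fun s hs =>
    circleMap_mem_resolventSet ha (hr.trans_le (uIcc_of_le hrR ▸ hs).1) t
  set φ' : ℝ → ℂ := fun s =>
    exp (t * I) • ℓ (-(n : ℂ) • resolvent a (circleMap 0 s t) ^ (n + 1))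
  have hderiv : ∀ s ∈ [[r, R]],
      HasDerivAt (fun s => ℓ (resolvent a (circleMap 0 s t) ^ n)) (φ' s) s := fun s hs =>
    ((ℓ.hasFDerivAt.comp_hasDerivAt _ (hasDerivAt_resolvent_pow (hmem s hs) n)).scomp s
      (hasDerivAt_circleMap_radius 0 s t) :)
  have hpow : ContinuousOn (fun s => resolvent a (circleMap 0 s t) ^ (n + 1)) [[r, R]] :=
    (continuousOn_resolvent_pow (n + 1)).comp
      (fun s _ => (hasDerivAt_circleMap_radius 0 s t).continuousAt.continuousWithinAt) hmem
  have hφ' : ContinuousOn φ' [[r, R]] := by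
    simp only [φ']
    fun_prop
  have hftc := integral_eq_sub_of_hasDerivAt hderiv hφ'.intervalIntegrable
  calc ‖ℓ (resolvent a (circleMap 0 r t) ^ n)‖
      = ‖ℓ (resolvent a (circleMap 0 R t) ^ n) - ∫ s in r..R, φ' s‖ := by
        rw [hftc, sub_sub_cancel]
    _ ≤ ‖ℓ (resolvent a (circleMap 0 R t) ^ n)‖ + ‖∫ s in r..R, φ' s‖ := norm_sub_le _ _
    _ ≤ ‖ℓ (resolvent a (circleMap 0 R t) ^ n)‖ + ∫ s in r..R, ‖φ' s‖ := by
        gcongr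
        exact norm_integral_le_integral_norm hrR
    _ = _ := by
        simp [φ', norm_exp_ofReal_mul_I, intervalIntegral.integral_const_mul]

lemma tendsto_circleNormIntegral_atTop {n : ℕ} (hn : n ≠ 0) :
    Tendsto (circleNormIntegral ℓ a n) atTop (𝓝 0) := by
  unfold circleNormIntegral
  have hcirc : Tendsto (fun q : ℝ × ℝ => circleMap 0 q.1 q.2) (atTop ×ˢ ⊤) (cobounded ℂ) := by
    rw [← comap_norm_atTop, tendsto_comap_iff]
    simpa [Function.comp_def] using tendsto_abs_atTop_atTop.comp tendsto_fst
  have hpow : Tendsto (fun b : A => ‖ℓ (b ^ n)‖) (𝓝 0) (𝓝 0) := by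
    simpa [hn] using (by fun_prop : Continuous fun b : A => ‖ℓ (b ^ n)‖).tendsto 0
  have hunif :
      TendstoUniformly (fun (R t : ℝ) => ‖ℓ (resolvent a (circleMap 0 R t) ^ n)‖) 0 atTop := by
    rw [tendstoUniformly_iff_tendsto]
    exact Uniform.tendsto_nhds_right.mp
      (hpow.comp ((spectrum.resolvent_tendsto_cobounded a).comp hcirc))
  simpa using hunif.tendstoUniformlyOn.tendsto_intervalIntegral_of_continuousOn
    ((eventually_gt_atTop 1).mono fun R hR =>
      (continuous_apply_resolvent_pow_circleMap ha ℓ n hR).norm.continuousOn)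

lemma circleNormIntegral_le (n : ℕ) {r R : ℝ} (hr : 1 < r) (hrR : r ≤ R) :
    circleNormIntegral ℓ a n r ≤
      circleNormIntegral ℓ a n R + n * ∫ s in r..R, circleNormIntegral ℓ a (n + 1) s := by
  set F : ℝ → ℝ → ℝ := fun t s => ‖ℓ (resolvent a (circleMap 0 s t) ^ (n + 1))‖
  have hF : IntegrableOn (Function.uncurry F) (Ι 0 (2 * π) ×ˢ Ι r R) :=
    ContinuousOn.integrableOn_uIoc_prod <|
      (continuousOn_apply_resolvent_pow_circleMap ha ℓ (n + 1)).norm.mono <|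
        prod_mono (subset_univ _) fun s hs => hr.trans_le (uIcc_of_le hrR ▸ hs).1
  have hFR :
      IntervalIntegrable (fun t => ‖ℓ (resolvent a (circleMap 0 R t) ^ n)‖) volume 0 (2 * π) :=
    (continuous_apply_resolvent_pow_circleMap ha ℓ n (hr.trans_le hrR)).norm.intervalIntegrable _ _
  have hFint := hF.intervalIntegrable_intervalIntegral.const_mul (n : ℝ)
  calc circleNormIntegral ℓ a n r
      ≤ ∫ t in (0 : ℝ)..2 * π,
          (‖ℓ (resolvent a (circleMap 0 R t) ^ n)‖ + n * ∫ s in r..R, F t s) :=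
        integral_mono_on (by positivity)
          ((continuous_apply_resolvent_pow_circleMap ha ℓ n hr).norm.intervalIntegrable _ _)
          (hFR.add hFint) fun t _ => norm_apply_resolvent_pow_circleMap_le ha ℓ n hr hrR t
    _ = circleNormIntegral ℓ a n R + n * ∫ s in r..R, circleNormIntegral ℓ a (n + 1) s := by
        rw [integral_add hFR hFint, intervalIntegral.integral_const_mul,
          intervalIntegral_intervalIntegral_swap hF]
        rfl

lemma circleNormIntegral_le_of_succ {j : ℕ} (hj : j ≠ 0) {D : ℝ}
    (hD : ∀ s, 1 < s → circleNormIntegral ℓ a (j + 2) s ≤ D / ((s + 1) * (s - 1) ^ (j + 1)))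
    {r : ℝ} (hr : 1 < r) :
    circleNormIntegral ℓ a (j + 1) r ≤ D * (j + 1) / j / ((r + 1) * (r - 1) ^ j) := by
  have hnonneg : ∀ s, 0 ≤ circleNormIntegral ℓ a (j + 2) s := fun s =>
    integral_nonneg (by positivity) fun _ _ => norm_nonneg _
  have hD0 : 0 ≤ D := by
    have := (hnonneg 2).trans (hD 2 one_lt_two)
    norm_num at this
    linarith
  have hbound : ∀ R, r ≤ R → circleNormIntegral ℓ a (j + 1) r ≤
      circleNormIntegral ℓ a (j + 1) R + (j + 1) * (D / (r + 1) * (((r - 1) ^ j)⁻¹ / j)) := by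
    intro R hrR
    have hzero : (0 : ℝ) ∉ [[r - 1, R - 1]] := fun h => by
      rw [uIcc_of_le (by linarith)] at h; linarith [h.1]
    have hint :
        IntervalIntegrable (fun s => D / (r + 1) * (s - 1) ^ (-(j + 1 : ℤ))) volume r R := by
      simpa using
        ((intervalIntegrable_zpow (Or.inr hzero)).comp_sub_right 1).const_mul (D / (r + 1))
    calc circleNormIntegral ℓ a (j + 1) r
        ≤ circleNormIntegral ℓ a (j + 1) R +
            (j + 1) * ∫ s in r..R, circleNormIntegral ℓ a (j + 2) s := by
          exact_mod_cast circleNormIntegral_le ha ℓ (j + 1) hr hrR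
      _ ≤ circleNormIntegral ℓ a (j + 1) R +
            (j + 1) * ∫ s in r..R, D / (r + 1) * (s - 1) ^ (-(j + 1 : ℤ)) := by
          gcongr
          rw [integral_of_le hrR, integral_of_le hrR]
          refine integral_mono_of_nonneg (ae_of_all _ hnonneg)
            ((intervalIntegrable_iff_integrableOn_Ioc_of_le hrR).mp hint)
            (ae_restrict_of_forall_mem measurableSet_Ioc fun s hs =>
              (hD s (hr.trans hs.1)).trans ?_)
          have : 0 < s - 1 := by linarith [hs.1]
          dsimp only
          rw [zpow_neg, ← Nat.cast_succ, zpow_natCast, ← div_eq_mul_inv, div_mul_eq_div_div]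
          gcongr
          linarith [hs.1]
      _ ≤ _ := by
          rw [intervalIntegral.integral_const_mul]
          gcongr
          exact integral_sub_zpow_le hj hr hrR
  have hlim := (tendsto_circleNormIntegral_atTop ha ℓ j.succ_ne_zero).add_const
    ((j + 1) * (D / (r + 1) * (((r - 1) ^ j)⁻¹ / j)))
  calc circleNormIntegral ℓ a (j + 1) r ≤ 0 + (j + 1) * (D / (r + 1) * (((r - 1) ^ j)⁻¹ / j)) :=
        ge_of_tendsto hlim ((eventually_ge_atTop r).mono hbound)
    _ = D * (j + 1) / j / ((r + 1) * (r - 1) ^ j) := by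
        rw [zero_add, div_eq_mul_inv _ ((r + 1) * _), mul_inv]
        ring

lemma circleNormIntegral_le_of_le {m : ℕ} {C : ℝ}
    (hC : ∀ r, 1 < r → circleNormIntegral ℓ a (m + 1) r ≤ C / ((r + 1) * (r - 1) ^ m))
    {k : ℕ} (hk : k ≠ 0) (hkm : k ≤ m) {r : ℝ} (hr : 1 < r) :
    circleNormIntegral ℓ a (k + 1) r ≤ C * m / k / ((r + 1) * (r - 1) ^ k) := by
  induction hkm using Nat.decreasingInduction generalizing r with
  | self =>
    have : (m : ℝ) ≠ 0 := by exact_mod_cast hk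
    simpa [mul_div_cancel_right₀ _ this] using hC r hr
  | of_succ k hkm ih =>
    have := circleNormIntegral_le_of_succ ha ℓ hk (D := C * m / (k + 1))
      (fun s hs => by exact_mod_cast ih k.succ_ne_zero hs) hr
    rwa [div_mul_cancel₀ _ (by positivity)] at this

end

theorem stmt5_general {X : Type*} [NormedAddCommGroup X] [NormedSpace ℂ X] [CompleteSpace X]
    (T : X →L[ℂ] X) (hσ : spectrum ℂ T ⊆ closedBall 0 1)
    (m : ℕ) (C : ℝ)
    (hGFS : ∀ r : ℝ, 1 < r → ∀ (x : X) (x' : StrongDual ℂ X),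
      ∫ t in (0:ℝ)..(2*π), ‖x' ((resolvent T ((r : ℂ) * exp (t * I)) ^ (m+1)) x)‖
        ≤ C / ((r+1)*(r-1)^m) * ‖x‖ * ‖x'‖) :
    ∀ k : ℕ, 1 ≤ k → k ≤ m → ∀ r : ℝ, 1 < r → ∀ (x : X) (x' : StrongDual ℂ X),
      ∫ t in (0:ℝ)..(2*π), ‖x' ((resolvent T ((r : ℂ) * exp (t * I)) ^ (k+1)) x)‖
        ≤ (C * m / k) / ((r+1)*(r-1)^k) * ‖x‖ * ‖x'‖ := by
  intro k hk hkm r hr x x'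
  set ℓ := x'.comp (ContinuousLinearMap.apply ℂ X x)
  have hℓ (n : ℕ) (s : ℝ) : circleNormIntegral ℓ T n s =
      ∫ t in (0:ℝ)..(2*π), ‖x' ((resolvent T ((s : ℂ) * exp (t * I)) ^ n) x)‖ := by
    simp [ℓ, circleNormIntegral, circleMap_zero]
  have hbound := circleNormIntegral_le_of_le hσ ℓ (C := C * ‖x‖ * ‖x'‖)
    (fun s hs => by rw [hℓ]; convert hGFS s hs x x' using 1; ring) (by omega) hkm hr
  rw [hℓ] at hbound
  convert hbound using 1
  ring

/-- `(GFS)_m` implies, for every `1 ≤ k ≤ m`, the estimate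
`∫₀^{2π}|⟨R(re^{it},T)^{k+1}x,x*⟩|dt ≤ (Cm/k)/((r+1)(r−1)^k)‖x‖‖x*‖`;
in particular `(GFS)_m` implies `(GFS)_k` for all `1 ≤ k ≤ m`. -/
theorem stmt5 {X : Type*} [NormedAddCommGroup X] [NormedSpace ℂ X] [CompleteSpace X]
    (T : X →L[ℂ] X) (hσ : spectrum ℂ T ⊆ closedBall 0 1)
    (m : ℕ) (hm : 1 ≤ m) (C : ℝ) (hC : 0 < C)
    (hGFS : ∀ r : ℝ, 1 < r → ∀ (x : X) (x' : StrongDual ℂ X),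
      ∫ t in (0:ℝ)..(2*π), ‖x' ((resolvent T ((r : ℂ) * exp (t * I)) ^ (m+1)) x)‖
        ≤ C / ((r+1)*(r-1)^m) * ‖x‖ * ‖x'‖) :
    ∀ k : ℕ, 1 ≤ k → k ≤ m → ∀ r : ℝ, 1 < r → ∀ (x : X) (x' : StrongDual ℂ X),
      ∫ t in (0:ℝ)..(2*π), ‖x' ((resolvent T ((r : ℂ) * exp (t * I)) ^ (k+1)) x)‖
        ≤ (C * m / k) / ((r+1)*(r-1)^k) * ‖x‖ * ‖x'‖ :=
  stmt5_general T hσ m C hGFS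
end

section
/- Let T ∈ B(X) with σ(T) ⊆ closed unit disk. If T has the 1-derivative bounded functional calculus, i.e. there is C > 0 such that ‖φ'(T)‖ ≤ C/(r−1) ‖φ‖_{H^∞(rD)} for all r > 1 and all bounded holomorphic φ on rD, then T has the m-derivative bounded functional calculus for every m ≥ 1: ‖φ^(m)(T)‖ ≤ 2^m (m−1)! C/(r−1)^m ‖φ‖_{H^∞(rD)}. -/
open Complex MeasureTheory Metric
open scoped Real
open scoped NNReal

lemma cauchy_bound {f : ℂ → ℂ} {c : ℂ} {ρ Mb : ℝ} (hρ : 0 < ρ)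
    (hd : DifferentiableOn ℂ f (closedBall c ρ))
    (hM : ∀ w ∈ closedBall c ρ, ‖f w‖ ≤ Mb) (n : ℕ) :
    ‖iteratedDeriv n f c‖ ≤ n.factorial * Mb / ρ ^ n := by
  have hMb : 0 ≤ Mb := (norm_nonneg _).trans (hM c (mem_closedBall_self hρ.le))
  lift ρ to ℝ≥0 using hρ.le with ρ'
  have hρ' : (0:ℝ≥0) < ρ' := by exact_mod_cast hρ
  have h := hd.hasFPowerSeriesOnBall hρ'
  have key := h.factorial_smul (y := (1:ℂ)) n
  have h1 : ‖iteratedDeriv n f c‖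
      = n.factorial * ‖cauchyPowerSeries f c ρ' n fun _ => (1:ℂ)‖ := by
    rw [iteratedDeriv_eq_iteratedFDeriv, ← key, nsmul_eq_mul, norm_mul]
    simp
  have h2 : ‖cauchyPowerSeries f c ρ' n fun _ => (1:ℂ)‖ ≤ ‖cauchyPowerSeries f c ρ' n‖ := by
    refine le_trans ((cauchyPowerSeries f c ρ' n).le_opNorm _) ?_
    simp
  have h3 := norm_cauchyPowerSeries_le f c ρ' n
  have hint : (∫ θ in (0:ℝ)..2*π, ‖f (circleMap c ρ' θ)‖) ≤ 2*π*Mb := by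
    have hcont : ContinuousOn (fun θ : ℝ => ‖f (circleMap c ρ' θ)‖) (Set.uIcc 0 (2*π)) := by
      apply ContinuousOn.norm
      apply hd.continuousOn.comp (continuous_circleMap c ρ').continuousOn
      intro θ _
      exact sphere_subset_closedBall (circleMap_mem_sphere c hρ.le θ)
    calc (∫ θ in (0:ℝ)..2*π, ‖f (circleMap c ρ' θ)‖)
        ≤ ∫ _ in (0:ℝ)..2*π, Mb := by
          apply intervalIntegral.integral_mono_on Real.two_pi_pos.le
          · exact hcont.intervalIntegrable
          · exact intervalIntegrable_const
          · intro θ _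
            exact hM _ (sphere_subset_closedBall (circleMap_mem_sphere c hρ.le θ))
      _ = 2*π*Mb := by simp [mul_comm]
  have h4 : ‖cauchyPowerSeries f c ρ' n‖ ≤ Mb / ρ' ^ n := by
    refine h3.trans ?_
    rw [_root_.abs_of_nonneg (show (0:ℝ) ≤ ρ' from ρ'.2), div_eq_mul_inv, ← inv_pow]
    apply mul_le_mul_of_nonneg_right _ (by positivity)
    calc (2*π)⁻¹ * ∫ θ in (0:ℝ)..2*π, ‖f (circleMap c ρ' θ)‖
        ≤ (2*π)⁻¹ * (2*π*Mb) := by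
          apply mul_le_mul_of_nonneg_left hint (by positivity)
      _ = Mb := by field_simp
  calc ‖iteratedDeriv n f c‖ = n.factorial * ‖cauchyPowerSeries f c ρ' n fun _ => (1:ℂ)‖ := h1
    _ ≤ n.factorial * (Mb / ρ' ^ n) := by
        apply mul_le_mul_of_nonneg_left (h2.trans h4) (by positivity)
    _ = n.factorial * Mb / ρ' ^ n := by ring


lemma an_iter {f : ℂ → ℂ} {s : Set ℂ} (h : AnalyticOnNhd ℂ f s) (k : ℕ) :
    AnalyticOnNhd ℂ (iteratedDeriv k f) s := by
  induction k with
  | zero => simpa [iteratedDeriv_zero] using h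
  | succ n ih => rw [iteratedDeriv_succ]; exact ih.deriv


/-- If `T` has the 1-derivative bounded functional calculus
(`‖φ'(T)‖ ≤ C/(r−1)‖φ‖_{H^∞(rD)}`), then it has the `m`-derivative bounded
functional calculus: `‖φ^(m)(T)‖ ≤ 2^m (m−1)! C/(r−1)^m ‖φ‖_{H^∞(rD)}`.
Here `Φ ψ` denotes the operator `ψ(T)` obtained by the Riesz–Dunford calculus of `T`,
so that `φ^(m)(T) = Φ (iteratedDeriv m φ)`. -/
theorem stmt7 {X : Type*} [NormedAddCommGroup X] [NormedSpace ℂ X] [CompleteSpace X]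
    (T : X →L[ℂ] X) (hσ : spectrum ℂ T ⊆ closedBall 0 1)
    (Φ : (ℂ → ℂ) → (X →L[ℂ] X))
    (hΦ : ∀ (ρ' : ℝ), 1 < ρ' → ∀ ψ : ℂ → ℂ, DifferentiableOn ℂ ψ (ball 0 ρ') →
      (∃ M, ∀ z ∈ ball (0:ℂ) ρ', ‖ψ z‖ ≤ M) → ∀ ρ : ℝ, 1 < ρ → ρ < ρ' →
      Φ ψ = (1 / (2*π) : ℝ) • (∫ t in (0:ℝ)..(2*π),
        ((ρ : ℂ) * exp (t * I) * ψ ((ρ : ℂ) * exp (t * I))) •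
          resolvent T ((ρ : ℂ) * exp (t * I))))
    (C : ℝ) (hC : 0 < C)
    (h1 : ∀ r : ℝ, 1 < r → ∀ φ : ℂ → ℂ, DifferentiableOn ℂ φ (ball 0 r) →
      (∃ M, ∀ z ∈ ball (0:ℂ) r, ‖φ z‖ ≤ M) →
      ‖Φ (deriv φ)‖ ≤ C / (r - 1) * ⨆ z ∈ ball (0:ℂ) r, ‖φ z‖) :
    ∀ m : ℕ, 1 ≤ m → ∀ r : ℝ, 1 < r → ∀ φ : ℂ → ℂ, DifferentiableOn ℂ φ (ball 0 r) →
      (∃ M, ∀ z ∈ ball (0:ℂ) r, ‖φ z‖ ≤ M) →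
      ‖Φ (iteratedDeriv m φ)‖ ≤ 2^m * (m-1).factorial * C / (r-1)^m *
        ⨆ z ∈ ball (0:ℂ) r, ‖φ z‖ := by
  intro m hm r hr φ hφd hφb
  obtain ⟨k, rfl⟩ : ∃ k, m = k + 1 := ⟨m - 1, (Nat.succ_pred_eq_of_pos hm).symm⟩
  set S := ⨆ z ∈ ball (0:ℂ) r, ‖φ z‖ with hSdef
  have hS0 : 0 ≤ S := Real.iSup_nonneg fun z => Real.iSup_nonneg fun _ => norm_nonneg _
  have hSle : ∀ w ∈ ball (0:ℂ) r, ‖φ w‖ ≤ S := by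
    obtain ⟨M, hM⟩ := hφb
    intro w hw
    have hbdd : BddAbove (Set.range fun z => ⨆ _ : z ∈ ball (0:ℂ) r, ‖φ z‖) := by
      refine ⟨max M 0, ?_⟩
      rintro x ⟨z, rfl⟩
      exact Real.iSup_le (fun h => (hM z h).trans (le_max_left M 0)) (le_max_right M 0)
    calc ‖φ w‖ = ⨆ _ : w ∈ ball (0:ℂ) r, ‖φ w‖ := by rw [ciSup_pos hw]
      _ ≤ S := le_ciSup hbdd w
  set r' : ℝ := (1 + r) / 2 with hr'def
  set ρ : ℝ := (r - 1) / 2 with hρdef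
  have hr' : 1 < r' := by rw [hr'def]; linarith
  have hr'r : r' < r := by rw [hr'def]; linarith
  have hρ : 0 < ρ := by rw [hρdef]; linarith
  have han : AnalyticOnNhd ℂ φ (ball 0 r) := hφd.analyticOnNhd isOpen_ball
  have hψan : AnalyticOnNhd ℂ (iteratedDeriv k φ) (ball 0 r) := an_iter han k
  have hsub : ball (0:ℂ) r' ⊆ ball 0 r := ball_subset_ball hr'r.le
  have key : ∀ z ∈ ball (0:ℂ) r', ‖iteratedDeriv k φ z‖ ≤ k.factorial * S / ρ ^ k := by
    intro z hz
    have hsub2 : closedBall z ρ ⊆ ball (0:ℂ) r := by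
      intro w hw
      rw [mem_closedBall] at hw
      rw [mem_ball] at hz ⊢
      calc dist w 0 ≤ dist w z + dist z 0 := dist_triangle _ _ _
        _ < ρ + r' := by have := hz; linarith [hw]
        _ = r := by rw [hρdef, hr'def]; ring
    exact cauchy_bound hρ (hφd.mono hsub2) (fun w hw => hSle w (hsub2 hw)) k
  have hψd : DifferentiableOn ℂ (iteratedDeriv k φ) (ball 0 r') :=
    ((hψan.mono hsub).differentiableOn)
  have hψb : ∃ M, ∀ z ∈ ball (0:ℂ) r', ‖iteratedDeriv k φ z‖ ≤ M :=
    ⟨k.factorial * S / ρ ^ k, key⟩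
  have hmain := h1 r' hr' (iteratedDeriv k φ) hψd hψb
  rw [← iteratedDeriv_succ] at hmain
  have hK0 : 0 ≤ (k.factorial : ℝ) * S / ρ ^ k := by positivity
  have hsup : (⨆ z ∈ ball (0:ℂ) r', ‖iteratedDeriv k φ z‖) ≤ k.factorial * S / ρ ^ k :=
    Real.iSup_le (fun z => Real.iSup_le (fun hz => key z hz) hK0) hK0
  have hr'1 : 0 < r' - 1 := by linarith
  have hCpos : 0 ≤ C / (r' - 1) := by positivity
  calc ‖Φ (iteratedDeriv (k + 1) φ)‖
      ≤ C / (r' - 1) * ⨆ z ∈ ball (0:ℂ) r', ‖iteratedDeriv k φ z‖ := hmain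
    _ ≤ C / (r' - 1) * (k.factorial * S / ρ ^ k) := mul_le_mul_of_nonneg_left hsup hCpos
    _ = 2 ^ (k + 1) * (k + 1 - 1).factorial * C / (r - 1) ^ (k + 1) * S := by
        rw [hr'def, hρdef]
        have h1r : r - 1 ≠ 0 := by linarith
        have h2 : (2:ℝ) ≠ 0 := two_ne_zero
        have hb : ((r-1)/2) ^ k ≠ 0 := pow_ne_zero _ (by positivity)
        have hc : (r-1) ^ (k+1) ≠ 0 := pow_ne_zero _ h1r
        simp only [Nat.add_sub_cancel]
        rw [div_pow]
        have e1 : (1+r)/2 - 1 = (r-1)/2 := by ring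
        rw [e1]
        field_simp
        ring
end

section
/- Let T ∈ B(X) satisfy (GFS)₁ with constant C. Then T has the 1-derivative bounded functional calculus: for all r > 1 and bounded holomorphic φ on rD, ‖φ'(T)‖ ≤ C/(2π(r−1)) ‖φ‖_{H^∞(rD)}. -/
open Complex MeasureTheory Metric Filter Set
open scoped Real Topology

/-!
Testing `φ'(T)` against `x ⊗ x'` turns the contour integral over the circle of radius `ρ` into
`(1/2π) ∫ ρe^{it} φ(ρe^{it}) ⟨R(ρe^{it},T)² x, x'⟩ dt`, which `(GFS)₁` bounds by
`ρ ‖φ‖_∞ C / (2π(ρ+1)(ρ-1)) ≤ C ‖φ‖_∞ / (2π(ρ-1))`. Letting `ρ → r` gives the claim.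
-/

theorem le_cbiSup_of_bounded {α : Type*} {f : α → ℝ} {s : Set α} (hf : ∃ M, ∀ z ∈ s, f z ≤ M)
    {z : α} (hz : z ∈ s) : f z ≤ ⨆ w ∈ s, f w := by
  obtain ⟨M, hM⟩ := hf
  refine le_ciSup₂ (f := fun w (_ : w ∈ s) => f w) ⟨M, ?_⟩ z hz
  simp only [mem_upperBounds, mem_iUnion, mem_range]
  rintro _ ⟨w, hw, rfl⟩
  exact hM w hw

theorem continuous_resolvent_circleMap {A : Type*} [NormedRing A] [NormedAlgebra ℂ A]
    [CompleteSpace A] {a : A} {s ρ : ℝ} (hσ : spectrum ℂ a ⊆ closedBall 0 s) (hρ : s < ρ) :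
    Continuous fun t : ℝ => resolvent a (circleMap 0 ρ t) := by
  refine continuous_iff_continuousAt.2 fun t => ?_
  have hres : circleMap 0 ρ t ∈ resolventSet ℂ a := by
    rw [spectrum.mem_resolventSet_iff, ← spectrum.notMem_iff]
    intro hmem
    have := hσ hmem
    rw [mem_closedBall, dist_zero_right, norm_circleMap_zero] at this
    linarith [le_abs_self ρ]
  exact ContinuousAt.comp (g := resolvent a)
    (spectrum.hasDerivAt_resolvent_const_left hres).continuousAt
    (continuous_circleMap 0 ρ).continuousAt

section WeakBound

variable {X : Type*} [NormedAddCommGroup X] [NormedSpace ℂ X] [CompleteSpace X]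

theorem dual_apply_intervalIntegral_smul {g : ℝ → ℂ} {B : ℝ → X →L[ℂ] X} {a b : ℝ}
    (hgB : IntervalIntegrable (fun t => g t • B t) volume a b) (x : X) (x' : StrongDual ℂ X) :
    x' ((∫ t in a..b, g t • B t) x) = ∫ t in a..b, g t * x' (B t x) := by
  have h := (x'.comp (ContinuousLinearMap.apply ℂ X x)).intervalIntegral_comp_comm hgB
  simp only [ContinuousLinearMap.comp_apply, ContinuousLinearMap.apply_apply,
    map_smul, smul_eq_mul] at h
  exact h.symm

theorem norm_intervalIntegral_smul_le_of_weak_bound {g : ℝ → ℂ} {B : ℝ → X →L[ℂ] X}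
    {a b M K : ℝ} (hab : a ≤ b) (hg : Continuous g) (hB : Continuous B) (hgM : ∀ t, ‖g t‖ ≤ M)
    (hK : 0 ≤ K) (hweak : ∀ (x : X) (x' : StrongDual ℂ X),
      ∫ t in a..b, ‖x' (B t x)‖ ≤ K * ‖x‖ * ‖x'‖) :
    ‖∫ t in a..b, g t • B t‖ ≤ M * K := by
  have hM : 0 ≤ M := (norm_nonneg _).trans (hgM a)
  refine ContinuousLinearMap.opNorm_le_bound _ (by positivity) fun x => ?_
  refine NormedSpace.norm_le_dual_bound ℂ _ (by positivity) fun x' => ?_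
  have hx'B : Continuous fun t => x' (B t x) := x'.continuous.comp (hB.clm_apply continuous_const)
  rw [dual_apply_intervalIntegral_smul ((hg.smul hB).intervalIntegrable a b)]
  calc ‖∫ t in a..b, g t * x' (B t x)‖
      ≤ ∫ t in a..b, ‖g t * x' (B t x)‖ := intervalIntegral.norm_integral_le_integral_norm hab
    _ ≤ ∫ t in a..b, M * ‖x' (B t x)‖ := by
        refine intervalIntegral.integral_mono hab ((hg.mul hx'B).norm.intervalIntegrable a b)
          ((continuous_const.mul hx'B.norm).intervalIntegrable a b) fun t => ?_
        rw [norm_mul]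
        exact mul_le_mul_of_nonneg_right (hgM t) (norm_nonneg _)
    _ = M * ∫ t in a..b, ‖x' (B t x)‖ := intervalIntegral.integral_const_mul _ _
    _ ≤ M * (K * ‖x‖ * ‖x'‖) := mul_le_mul_of_nonneg_left (hweak x x') hM
    _ = M * K * ‖x‖ * ‖x'‖ := by ring

theorem norm_rieszDunford_deriv_le {T : X →L[ℂ] X}
    (hσ : spectrum ℂ T ⊆ closedBall 0 1) {C ρ M : ℝ} (hC : 0 ≤ C) (hρ : 1 < ρ)
    (hGFS : ∀ (x : X) (x' : StrongDual ℂ X),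
      ∫ t in (0:ℝ)..(2*π), ‖x' ((resolvent T (circleMap 0 ρ t) ^ 2) x)‖
        ≤ C / ((ρ+1)*(ρ-1)) * ‖x‖ * ‖x'‖)
    {f : ℂ → ℂ} (hf : ContinuousOn f (sphere 0 ρ)) (hfM : ∀ z ∈ sphere (0:ℂ) ρ, ‖f z‖ ≤ M) :
    ‖(1 / (2*π) : ℝ) • ∫ t in (0:ℝ)..(2*π),
        (circleMap 0 ρ t * f (circleMap 0 ρ t)) • resolvent T (circleMap 0 ρ t) ^ 2‖
      ≤ C / (2*π*(ρ-1)) * M := by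
  have hρ0 : 0 < ρ := one_pos.trans hρ
  have hon : ∀ t, circleMap 0 ρ t ∈ sphere (0:ℂ) ρ := circleMap_mem_sphere 0 hρ0.le
  have hM : 0 ≤ M := (norm_nonneg _).trans (hfM _ (hon 0))
  have hg : ∀ t, ‖circleMap 0 ρ t * f (circleMap 0 ρ t)‖ ≤ ρ * M := fun t => by
    rw [norm_mul, norm_circleMap_zero, abs_of_pos hρ0]
    exact mul_le_mul_of_nonneg_left (hfM _ (hon t)) hρ0.le
  have hint := norm_intervalIntegral_smul_le_of_weak_bound
    (g := fun t => circleMap 0 ρ t * f (circleMap 0 ρ t))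
    (B := fun t => resolvent T (circleMap 0 ρ t) ^ 2) Real.two_pi_pos.le
    ((continuous_circleMap 0 ρ).mul (hf.comp_continuous (continuous_circleMap 0 ρ) hon))
    ((continuous_resolvent_circleMap hσ hρ).pow 2) hg (div_nonneg hC (by nlinarith)) hGFS
  have hden : 0 < 2*π*(ρ-1) := by nlinarith [Real.pi_pos]
  rw [norm_smul, Real.norm_of_nonneg (by positivity)]
  calc 1 / (2*π) * ‖_‖ ≤ 1 / (2*π) * (ρ * M * (C / ((ρ+1)*(ρ-1)))) := by gcongr
    _ = C / (2*π*(ρ-1)) * M * (ρ / (ρ+1)) := by field_simp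
    _ ≤ C / (2*π*(ρ-1)) * M :=
        mul_le_of_le_one_right (by positivity) ((div_le_one (by linarith)).2 (by linarith))

end WeakBound

/-- `(GFS)₁` with constant `C` implies the 1-derivative bounded functional calculus:
`‖φ'(T)‖ ≤ C/(2π(r−1)) ‖φ‖_{H^∞(rD)}`, where `φ'(T)` is given by the Riesz–Dunford
formula `φ'(T) = (1/2π)∫₀^{2π} ρe^{it} φ(ρe^{it}) R(ρe^{it},T)² dt` for any `1 < ρ < r`. -/
theorem stmt8 {X : Type*} [NormedAddCommGroup X] [NormedSpace ℂ X] [CompleteSpace X]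
    (T : X →L[ℂ] X) (hσ : spectrum ℂ T ⊆ closedBall 0 1)
    (C : ℝ) (hC : 0 < C)
    (hGFS : ∀ r : ℝ, 1 < r → ∀ (x : X) (x' : StrongDual ℂ X),
      ∫ t in (0:ℝ)..(2*π), ‖x' ((resolvent T ((r : ℂ) * exp (t * I)) ^ 2) x)‖
        ≤ C / ((r+1)*(r-1)) * ‖x‖ * ‖x'‖)
    (r : ℝ) (hr : 1 < r) (φ : ℂ → ℂ)
    (hφ : DifferentiableOn ℂ φ (ball 0 r))
    (hφb : ∃ M, ∀ z ∈ ball (0:ℂ) r, ‖φ z‖ ≤ M)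
    (A : X →L[ℂ] X)
    (hA : ∀ ρ : ℝ, 1 < ρ → ρ < r →
      A = (1 / (2*π) : ℝ) • (∫ t in (0:ℝ)..(2*π),
        ((ρ : ℂ) * exp (t * I) * φ ((ρ : ℂ) * exp (t * I))) •
          resolvent T ((ρ : ℂ) * exp (t * I)) ^ 2)) :
    ‖A‖ ≤ C / (2*π*(r-1)) * ⨆ z ∈ ball (0:ℂ) r, ‖φ z‖ := by
  simp only [← circleMap_zero] at hGFS hA
  set M := ⨆ z ∈ ball (0:ℂ) r, ‖φ z‖
  have hbound : ∀ ρ ∈ Ioo 1 r, ‖A‖ ≤ C / (2*π*(ρ-1)) * M := fun ρ ⟨hρ1, hρr⟩ => by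
    rw [hA ρ hρ1 hρr]
    exact norm_rieszDunford_deriv_le hσ hC.le hρ1 (hGFS ρ hρ1)
      (hφ.continuousOn.mono (sphere_subset_ball hρr))
      fun z hz => le_cbiSup_of_bounded hφb (sphere_subset_ball hρr hz)
  have hcont : ContinuousAt (fun ρ : ℝ => C / (2*π*(ρ-1)) * M) r :=
    (continuousAt_const.div (by fun_prop) (by nlinarith [Real.pi_pos])).mul continuousAt_const
  exact ge_of_tendsto hcont.continuousWithinAt
    (eventually_of_mem (Ioo_mem_nhdsLT hr) hbound)
end

section
/- Let H be a Hilbert space and T ∈ B(H) with σ(T) ⊆ closed unit disk. Suppose there is C > 0 such that for all r > 1: (r²−1)∫₀^{2π}‖R(re^{it},T)x‖²dt ≤ C‖x‖² and (r²−1)∫₀^{2π}‖R(re^{it},T)*y‖²dt ≤ C‖y‖² for all x, y ∈ H. Then T satisfies (GFS)₁: ∫₀^{2π}|⟨R(re^{it},T)²x, y⟩|dt ≤ C/(r²−1) ‖x‖‖y‖ for all r > 1 and x, y ∈ H. -/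
open Complex MeasureTheory Metric ContinuousLinearMap
open scoped Real

/-!
Since `⟪R(λ)² x, y⟫ = ⟪R(λ) x, R(λ)* y⟫`, the integrand is bounded pointwise by
`‖R(λ) x‖ ‖R(λ)* y‖`, and Cauchy–Schwarz in `L²(0, 2π)` bounds its integral by the
product of the square roots of the two quadratic resolvent integrals, each at most
`C ‖·‖² / (r² - 1)`.
-/

theorem integral_mul_le_sqrt_mul_sqrt_of_nonneg {α : Type*} [MeasurableSpace α]
    {μ : Measure α} {f g : α → ℝ} (hf_nonneg : 0 ≤ᵐ[μ] f) (hg_nonneg : 0 ≤ᵐ[μ] g) (hf : MemLp f 2 μ)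
    (hg : MemLp g 2 μ) :
    ∫ a, f a * g a ∂μ ≤ √(∫ a, f a ^ 2 ∂μ) * √(∫ a, g a ^ 2 ∂μ) := by
  have := integral_mul_le_Lp_mul_Lq_of_nonneg Real.HolderConjugate.two_two hf_nonneg hg_nonneg
    (by simpa using hf) (by simpa using hg)
  simpa only [Real.rpow_two, Real.sqrt_eq_rpow] using this

theorem intervalIntegral_mul_le_sqrt_mul_sqrt_of_nonneg {f g : ℝ → ℝ} {a b : ℝ}
    (hab : a ≤ b) (hf : Continuous f) (hg : Continuous g) (hf_nonneg : 0 ≤ f) (hg_nonneg : 0 ≤ g) :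
    ∫ t in a..b, f t * g t ≤ √(∫ t in a..b, f t ^ 2) * √(∫ t in a..b, g t ^ 2) := by
  simp only [intervalIntegral.integral_of_le hab]
  refine integral_mul_le_sqrt_mul_sqrt_of_nonneg (.of_forall hf_nonneg) (.of_forall hg_nonneg)
    ?_ ?_
  · exact (memLp_two_iff_integrable_sq hf.aestronglyMeasurable).2 (hf.pow 2).integrableOn_Ioc
  · exact (memLp_two_iff_integrable_sq hg.aestronglyMeasurable).2 (hg.pow 2).integrableOn_Ioc

theorem mem_resolventSet_of_spectrum_subset_closedBall {𝕜 A : Type*} [NormedField 𝕜]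
    [Ring A] [Algebra 𝕜 A] {a : A} {ρ : ℝ} (hσ : spectrum 𝕜 a ⊆ closedBall 0 ρ) {z : 𝕜}
    (hz : ρ < ‖z‖) :
    z ∈ resolventSet 𝕜 a :=
  spectrum.mem_resolventSet_iff.2 <| spectrum.notMem_iff.1 fun hz_mem ↦
    hz.not_ge (by simpa using hσ hz_mem)

theorem Continuous.resolvent {𝕜 A X : Type*} [NontriviallyNormedField 𝕜] [NormedRing A]
    [NormedAlgebra 𝕜 A] [CompleteSpace A] [TopologicalSpace X] {a : A} {γ : X → 𝕜}
    (hγ : Continuous γ) (hγa : ∀ t, γ t ∈ resolventSet 𝕜 a) :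
    Continuous fun t ↦ resolvent a (γ t) :=
  continuous_iff_continuousAt.2 fun t ↦
    (spectrum.hasDerivAt_resolvent_const_left (hγa t)).continuousAt.comp hγ.continuousAt

theorem norm_inner_sq_apply_le {𝕜 E : Type*} [RCLike 𝕜] [NormedAddCommGroup E]
    [InnerProductSpace 𝕜 E] [CompleteSpace E] (R : E →L[𝕜] E) (x y : E) :
    ‖(inner 𝕜 ((R ^ 2) x) y : 𝕜)‖ ≤ ‖R x‖ * ‖adjoint R y‖ := by
  rw [sq, mul_apply_eq_comp, ← adjoint_inner_right]
  exact norm_inner_le_norm _ _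

/-- On a Hilbert space, the quadratic resolvent estimates for `T` and `T*` imply
the discrete Gomilko–Shi–Feng condition `(GFS)₁`. -/
theorem stmt11 {H : Type*} [NormedAddCommGroup H] [InnerProductSpace ℂ H] [CompleteSpace H]
    (T : H →L[ℂ] H) (hσ : spectrum ℂ T ⊆ closedBall 0 1)
    (C : ℝ) (hC : 0 < C)
    (h1 : ∀ r : ℝ, 1 < r → ∀ x : H,
      (r^2-1) * ∫ t in (0:ℝ)..(2*π), ‖resolvent T ((r : ℂ) * exp (t * I)) x‖^2 ≤ C * ‖x‖^2)
    (h2 : ∀ r : ℝ, 1 < r → ∀ y : H,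
      (r^2-1) * ∫ t in (0:ℝ)..(2*π),
        ‖adjoint (resolvent T ((r : ℂ) * exp (t * I))) y‖^2 ≤ C * ‖y‖^2) :
    ∀ r : ℝ, 1 < r → ∀ x y : H,
      ∫ t in (0:ℝ)..(2*π),
          ‖(inner ℂ ((resolvent T ((r : ℂ) * exp (t * I)) ^ 2) x) y : ℂ)‖
        ≤ C / (r^2-1) * ‖x‖ * ‖y‖ := by
  intro r hr x y
  have hr2 : 0 < r ^ 2 - 1 := by nlinarith
  have hnorm (t : ℝ) : ‖(r : ℂ) * exp (t * I)‖ = r := by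
    simp [norm_exp_ofReal_mul_I, abs_of_pos (zero_lt_one.trans hr)]
  set R : ℝ → H →L[ℂ] H := fun t ↦ resolvent T ((r : ℂ) * exp (t * I))
  have hR : Continuous R := Continuous.resolvent (by fun_prop) fun t ↦
    mem_resolventSet_of_spectrum_subset_closedBall hσ (by rwa [hnorm])
  have hRx : Continuous fun t ↦ ‖R t x‖ := (hR.clm_apply continuous_const).norm
  have hRy : Continuous fun t ↦ ‖adjoint (R t) y‖ :=
    ((adjoint.continuous.comp hR).clm_apply continuous_const).norm
  have hR2xy : Continuous fun t ↦ ‖(inner ℂ ((R t ^ 2) x) y : ℂ)‖ :=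
    (((hR.pow 2).clm_apply continuous_const).inner continuous_const).norm
  calc ∫ t in (0:ℝ)..(2*π), ‖(inner ℂ ((R t ^ 2) x) y : ℂ)‖
      ≤ ∫ t in (0:ℝ)..(2*π), ‖R t x‖ * ‖adjoint (R t) y‖ :=
        intervalIntegral.integral_mono (by positivity) (hR2xy.intervalIntegrable _ _)
          ((hRx.mul hRy).intervalIntegrable _ _) fun t ↦ norm_inner_sq_apply_le _ x y
    _ ≤ √(∫ t in (0:ℝ)..(2*π), ‖R t x‖ ^ 2) *
          √(∫ t in (0:ℝ)..(2*π), ‖adjoint (R t) y‖ ^ 2) :=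
        intervalIntegral_mul_le_sqrt_mul_sqrt_of_nonneg (by positivity) hRx hRy
          (fun _ ↦ norm_nonneg _) (fun _ ↦ norm_nonneg _)
    _ ≤ √(C * ‖x‖ ^ 2 / (r ^ 2 - 1)) * √(C * ‖y‖ ^ 2 / (r ^ 2 - 1)) := by
        gcongr
        · rw [le_div_iff₀ hr2, mul_comm]; exact h1 r hr x
        · rw [le_div_iff₀ hr2, mul_comm]; exact h2 r hr y
    _ = √((C / (r ^ 2 - 1) * ‖x‖ * ‖y‖) ^ 2) := by
        rw [← Real.sqrt_mul (by positivity)]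
        congr 1
        field_simp
    _ = C / (r ^ 2 - 1) * ‖x‖ * ‖y‖ := Real.sqrt_sq (by positivity)
end

section
/- Let H be a Hilbert space and T ∈ B(H) with σ(T) ⊆ closed unit disk. Then T is power bounded if and only if T satisfies the discrete Gomilko–Shi–Feng condition (GFS)₁: there is C > 0 with ∫₀^{2π}|⟨R(re^{it},T)²x, y⟩|dt ≤ C/(r²−1)‖x‖‖y‖ for all r > 1, x, y ∈ H. -/
/-!
For `|λ| > 1 ≥ ρ(T)` the resolvent is the Neumann series `R(λ) = ∑ λ^{-(k+1)} Tᵏ`, absolutely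
convergent because the power series of `(1 - z T)⁻¹` has radius `1 / ρ(T)`; by a Cauchy product
`R(λ)² = ∑ (k+1) λ^{-(k+2)} Tᵏ`. On the circle `λ = r e^{it}` both are Fourier series in `t`.

If `‖Tᵏ‖ ≤ M`, write `⟨R(λ)²x, y⟩ = ⟨R(λ)x, R(λ)*y⟩`. Parseval gives
`∫ ‖R(λ)x‖² dt = 2π ∑ r^{-2(k+1)} ‖Tᵏx‖² ≤ 2π M² ‖x‖² / (r² - 1)`, likewise for `R(λ)*y`, and the
Cauchy–Schwarz inequality yields `(GFS)₁` with `C = 2π M²`.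

Conversely, the `n`-th Fourier coefficient of `λ^{n+2} R(λ)²` is `(n+1) Tⁿ`, so `(GFS)₁` gives
`2π (n+1) |⟨Tⁿx, y⟩| ≤ r^{n+2} C / (r² - 1) ‖x‖ ‖y‖`. For `r = 1 + 1/(n+1)` the right-hand side is
at most `e² C (n+1) / 2 ‖x‖ ‖y‖`, hence `‖Tⁿ‖ ≤ e² C / (4π)`.
-/

open Complex MeasureTheory Metric
open scoped Real InnerProductSpace NNReal ENNReal

lemma norm_exp_int_mul_mul_I (m : ℤ) (t : ℝ) : ‖exp (m * t * I)‖ = 1 := by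
  rw [show (m : ℂ) * t = ((m * t : ℝ) : ℂ) by push_cast; rfl]
  exact norm_exp_ofReal_mul_I _

lemma integral_exp_int_mul_mul_I (m : ℤ) :
    ∫ t in (0 : ℝ)..2 * π, exp (m * t * I) = if m = 0 then (2 * π : ℂ) else 0 := by
  split_ifs with hm
  · simp [hm]
  · have hmI : (m : ℂ) * I ≠ 0 := mul_ne_zero (Int.cast_ne_zero.mpr hm) I_ne_zero
    simp_rw [mul_right_comm _ _ I]
    rw [integral_exp_mul_complex hmI, ofReal_zero, mul_zero, exp_zero,
      show (m : ℂ) * I * ((2 * π : ℝ) : ℂ) = m * (2 * π * I) by push_cast; ring,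
      exp_int_mul_two_pi_mul_I, sub_self, zero_div]

theorem hasSum_integral_of_hasSum_exp_smul {ι E : Type*} [Countable ι] [NormedAddCommGroup E]
    [NormedSpace ℂ E] [CompleteSpace E] {b : ι → E} {m : ι → ℤ} {f : ℝ → E}
    (hb : Summable fun i => ‖b i‖) (hf : ∀ t : ℝ, HasSum (fun i => exp (m i * t * I) • b i) (f t)) :
    HasSum (fun i => if m i = 0 then (2 * π : ℂ) • b i else 0) (∫ t in (0 : ℝ)..2 * π, f t) := by
  have h := intervalIntegral.hasSum_integral_of_dominated_convergence (μ := volume) (a := 0)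
    (b := 2 * π) (F := fun i (t : ℝ) => exp (m i * t * I) • b i) (fun i _ => ‖b i‖)
    (fun i => (by fun_prop : Continuous _).aestronglyMeasurable)
    (fun i => ae_of_all _ fun t _ => by rw [norm_smul, norm_exp_int_mul_mul_I, one_mul])
    (ae_of_all _ fun _ _ => hb) intervalIntegrable_const (ae_of_all _ fun t _ => hf t)
  convert h using 2 with i
  rw [intervalIntegral.integral_smul_const, integral_exp_int_mul_mul_I]
  split_ifs <;> simp

theorem hasSum_inner_prod {ι κ E : Type*} [NormedAddCommGroup E] [InnerProductSpace ℂ E]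
    {u : ι → E} {w : κ → E} {U W : E} (hu : HasSum u U) (hw : HasSum w W)
    (hu' : Summable fun i => ‖u i‖) (hw' : Summable fun k => ‖w k‖) :
    HasSum (fun p : ι × κ => ⟪u p.1, w p.2⟫_ℂ) ⟪U, W⟫_ℂ := by
  have hsum : Summable fun p : ι × κ => ⟪u p.1, w p.2⟫_ℂ :=
    .of_norm_bounded (hu'.mul_of_nonneg hw' (fun _ => norm_nonneg _) fun _ => norm_nonneg _)
      fun p => norm_inner_le_norm _ _
  have hrows : HasSum (fun i => ⟪u i, W⟫_ℂ) ⟪U, W⟫_ℂ := by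
    simpa only [innerSLFlip_apply_apply] using (innerSLFlip ℂ W).hasSum hu
  have hfib : ∀ i, HasSum (fun k => ⟪u i, w k⟫_ℂ) ⟪u i, W⟫_ℂ := fun i => by
    simpa only [innerSL_apply_apply] using (innerSL ℂ (u i)).hasSum hw
  rw [hrows.unique (hsum.hasSum.prod_fiberwise hfib)]
  exact hsum.hasSum

theorem hasSum_integral_norm_sq_of_hasSum_exp_smul {ι E : Type*} [Countable ι]
    [NormedAddCommGroup E] [InnerProductSpace ℂ E] {v : ι → E} {m : ι → ℤ} {g : ℝ → E}
    (hv : Summable fun k => ‖v k‖) (hm : Function.Injective m)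
    (hg : ∀ t : ℝ, HasSum (fun k => exp (m k * t * I) • v k) (g t)) :
    HasSum (fun k => 2 * π * ‖v k‖ ^ 2) (∫ t in (0 : ℝ)..2 * π, ‖g t‖ ^ 2) := by
  have hpt : ∀ t : ℝ, HasSum (fun p : ι × ι => exp ((m p.2 - m p.1 : ℤ) * t * I) • ⟪v p.1, v p.2⟫_ℂ)
      ((‖g t‖ ^ 2 : ℝ) : ℂ) := by
    intro t
    have hv' : Summable fun k => ‖exp (m k * t * I) • v k‖ := by
      simpa only [norm_smul, norm_exp_int_mul_mul_I, one_mul] using hv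
    convert hasSum_inner_prod (hg t) (hg t) hv' hv' using 1
    · ext p
      rw [inner_smul_left, inner_smul_right, ← exp_conj, smul_eq_mul, ← mul_assoc, ← exp_add]
      congr 2
      simp only [map_mul, conj_ofReal, conj_I, map_intCast]
      push_cast
      ring
    · rw [inner_self_eq_norm_sq_to_K]
      push_cast
      rfl
  have hsum : Summable fun p : ι × ι => ‖⟪v p.1, v p.2⟫_ℂ‖ :=
    .of_nonneg_of_le (fun _ => norm_nonneg _) (fun p => norm_inner_le_norm _ _)
      (hv.mul_of_nonneg hv (fun _ => norm_nonneg _) fun _ => norm_nonneg _)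
  have hint := hasSum_integral_of_hasSum_exp_smul hsum hpt
  have hdiag : ∀ p : ι × ι, p ∉ Set.range (fun k => (k, k)) →
      (if m p.2 - m p.1 = 0 then (2 * π : ℂ) • ⟪v p.1, v p.2⟫_ℂ else 0) = 0 := by
    rintro ⟨j, k⟩ hjk
    exact if_neg fun h => hjk ⟨j, Prod.ext rfl (hm (sub_eq_zero.mp h)).symm⟩
  rw [← (Function.Injective.hasSum_iff (fun j k h => congrArg Prod.fst h) hdiag),
    intervalIntegral.integral_ofReal] at hint
  rw [← hasSum_ofReal]
  convert hint using 2 with k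
  simp [inner_self_eq_norm_sq_to_K]

lemma circleMap_inv_pow (r t : ℝ) (k : ℕ) :
    (circleMap 0 r t)⁻¹ ^ k = exp ((-k : ℤ) * t * I) * (r : ℂ)⁻¹ ^ k := by
  rw [circleMap_zero, mul_inv, mul_pow, ← exp_neg, ← exp_nat_mul, mul_comm]
  push_cast
  ring_nf

lemma conj_circleMap_inv_pow (r t : ℝ) (k : ℕ) :
    (starRingEnd ℂ) (circleMap 0 r t)⁻¹ ^ k = exp ((k : ℤ) * t * I) * (r : ℂ)⁻¹ ^ k := by
  rw [map_inv₀, conj_circleMap_zero, circleMap_inv_pow]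
  push_cast
  ring_nf

lemma hasSum_geometric_inv_sq_succ {r : ℝ} (hr : 1 < r) :
    HasSum (fun k : ℕ => (r⁻¹ ^ (k + 1)) ^ 2) (r ^ 2 - 1)⁻¹ := by
  have hq : (r ^ 2)⁻¹ < 1 := inv_lt_one_of_one_lt₀ (one_lt_pow₀ hr two_ne_zero)
  have hsum : (r ^ 2)⁻¹ * (1 - (r ^ 2)⁻¹)⁻¹ = (r ^ 2 - 1)⁻¹ := by
    have : r ^ 2 - 1 ≠ 0 := by nlinarith
    field_simp
  rw [← hsum, show (fun k : ℕ => (r⁻¹ ^ (k + 1)) ^ 2) = fun k => (r ^ 2)⁻¹ * ((r ^ 2)⁻¹) ^ k by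
    ext k; ring]
  exact (hasSum_geometric_of_lt_one (by positivity) hq).mul_left _

theorem integral_mul_le_of_integral_sq_le {f g : ℝ → ℝ} {a b K u v : ℝ} (hab : a ≤ b)
    (hf : Continuous f) (hg : Continuous g) (hu : 0 < u) (hv : 0 < v)
    (hf2 : ∫ t in a..b, f t ^ 2 ≤ K * u ^ 2) (hg2 : ∫ t in a..b, g t ^ 2 ≤ K * v ^ 2) :
    ∫ t in a..b, f t * g t ≤ K * u * v := by
  have hpt : ∀ t, f t * g t ≤ v / (2 * u) * f t ^ 2 + u / (2 * v) * g t ^ 2 := fun t => by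
    rw [div_mul_eq_mul_div, div_mul_eq_mul_div, div_add_div _ _ (by positivity) (by positivity),
      le_div_iff₀ (by positivity)]
    nlinarith [sq_nonneg (v * f t - u * g t)]
  calc ∫ t in a..b, f t * g t
      ≤ ∫ t in a..b, (v / (2 * u) * f t ^ 2 + u / (2 * v) * g t ^ 2) :=
        intervalIntegral.integral_mono_on hab ((hf.mul hg).intervalIntegrable a b)
          (Continuous.intervalIntegrable (by fun_prop) a b) fun t _ => hpt t
    _ = v / (2 * u) * (∫ t in a..b, f t ^ 2) + u / (2 * v) * ∫ t in a..b, g t ^ 2 := by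
        rw [intervalIntegral.integral_add (Continuous.intervalIntegrable (by fun_prop) a b)
          (Continuous.intervalIntegrable (by fun_prop) a b),
          intervalIntegral.integral_const_mul, intervalIntegral.integral_const_mul]
    _ ≤ v / (2 * u) * (K * u ^ 2) + u / (2 * v) * (K * v ^ 2) := by gcongr
    _ = K * u * v := by field_simp; ring

lemma one_add_inv_succ_pow_div_le (n : ℕ) :
    (1 + 1 / (n + 1 : ℝ)) ^ (n + 2) / ((1 + 1 / (n + 1 : ℝ)) ^ 2 - 1)
      ≤ Real.exp 2 * (n + 1) / 2 := by
  set δ : ℝ := 1 / (n + 1) with hδ_def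
  have hδ : 0 < δ := by positivity
  have hnum : (1 + δ) ^ (n + 2) ≤ Real.exp 2 := calc
    (1 + δ) ^ (n + 2) ≤ Real.exp δ ^ (n + 2) := by
        gcongr
        linarith [Real.add_one_le_exp δ]
    _ = Real.exp (δ * (n + 2)) := by rw [← Real.exp_nat_mul]; push_cast; ring_nf
    _ ≤ Real.exp 2 := Real.exp_le_exp.mpr (by
        rw [hδ_def, div_mul_eq_mul_div, div_le_iff₀ (by positivity)]
        linarith)
  have hden : 2 * δ ≤ (1 + δ) ^ 2 - 1 := by nlinarith
  calc (1 + δ) ^ (n + 2) / ((1 + δ) ^ 2 - 1) ≤ Real.exp 2 / (2 * δ) :=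
        div_le_div₀ (by positivity) hnum (by positivity) hden
    _ = Real.exp 2 * (n + 1) / 2 := by rw [hδ_def]; field_simp

section ResolventSeries

variable {A : Type*} [NormedRing A] [NormedAlgebra ℂ A]

lemma spectralRadius_lt_nnnorm_circleMap {a : A} {r : ℝ}
    (hr : spectralRadius ℂ a < ENNReal.ofReal r) (t : ℝ) :
    spectralRadius ℂ a < ‖circleMap 0 r t‖₊ := by
  rw [← enorm_eq_nnnorm, ← ofReal_norm, norm_circleMap_zero]
  exact hr.trans_le (ENNReal.ofReal_le_ofReal (le_abs_self r))

variable [CompleteSpace A]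

theorem hasSum_pow_smul_pow_inverse_one_sub_smul {a : A} {z : ℂ}
    (hz : (‖z‖₊ : ℝ≥0∞) < (spectralRadius ℂ a)⁻¹) :
    HasSum (fun n => z ^ n • a ^ n) (Ring.inverse (1 - z • a)) ∧
      Summable fun n => ‖z ^ n • a ^ n‖ := by
  obtain ⟨r, hzr, hr⟩ := ENNReal.lt_iff_exists_nnreal_btwn.mp hz
  have hr0 : 0 < r := by exact_mod_cast (zero_le (α := ℝ≥0∞)).trans_lt hzr
  -- On the disc of radius `r < 1 / ρ(a)` the function is holomorphic, so its Taylor series there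
  -- is the Neumann series.
  have hp := (spectrum.hasFPowerSeriesOnBall_inverse_one_sub_smul ℂ a).exchange_radius
    ((spectrum.differentiableOn_inverse_one_sub_smul hr).hasFPowerSeriesOnBall hr0)
  have hzball : z ∈ eball (0 : ℂ) r := by
    rwa [mem_eball, edist_zero_right, enorm_eq_nnnorm]
  have hterm : ∀ n, ContinuousMultilinearMap.mkPiRing ℂ (Fin n) (a ^ n) (fun _ => z)
      = z ^ n • a ^ n := fun n => by
    simp [ContinuousMultilinearMap.mkPiRing_apply]
  constructor
  · simpa [hterm] using hp.hasSum hzball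
  · simpa [hterm] using FormalMultilinearSeries.summable_norm_apply _
      (eball_subset_eball hp.r_le hzball)

theorem hasSum_resolvent {a : A} {z : ℂ} (hz : spectralRadius ℂ a < ‖z‖₊) :
    HasSum (fun n => z⁻¹ ^ (n + 1) • a ^ n) (resolvent a z) ∧
      Summable fun n => ‖z⁻¹ ^ (n + 1) • a ^ n‖ := by
  have hz0 : z ≠ 0 := by
    rintro rfl
    simp at hz
  have hz' : (‖z⁻¹‖₊ : ℝ≥0∞) < (spectralRadius ℂ a)⁻¹ := by
    rwa [nnnorm_inv, ENNReal.coe_inv (nnnorm_ne_zero_iff.mpr hz0), ENNReal.inv_lt_inv]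
  have hres : resolvent a z = z⁻¹ • Ring.inverse (1 - z⁻¹ • a) := by
    have := spectrum.units_smul_resolvent_self (r := Units.mk0 z hz0) (a := a)
    rw [Units.smul_def, Units.val_mk0] at this
    rw [eq_inv_smul_iff₀ hz0, this, resolvent, map_one, Units.smul_def,
      Units.val_inv_eq_inv_val, Units.val_mk0]
  obtain ⟨hsum, hnorm⟩ := hasSum_pow_smul_pow_inverse_one_sub_smul hz'
  have hterm : ∀ n : ℕ, z⁻¹ ^ (n + 1) • a ^ n = z⁻¹ • (z⁻¹ ^ n • a ^ n) := fun n => by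
    rw [smul_smul, pow_succ']
  simp only [hterm]
  refine ⟨hres ▸ hsum.const_smul z⁻¹, ?_⟩
  simpa only [norm_smul] using hnorm.mul_left ‖z⁻¹‖

theorem hasSum_resolvent_sq {a : A} {z : ℂ} (hz : spectralRadius ℂ a < ‖z‖₊) :
    HasSum (fun n : ℕ => ((n + 1) * z⁻¹ ^ (n + 2)) • a ^ n) (resolvent a z ^ 2) ∧
      Summable fun n : ℕ => ‖((n + 1) * z⁻¹ ^ (n + 2)) • a ^ n‖ := by
  obtain ⟨hsum, hnorm⟩ := hasSum_resolvent hz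
  have hanti : ∀ n : ℕ, ∑ kl ∈ Finset.HasAntidiagonal.antidiagonal n,
      (z⁻¹ ^ (kl.1 + 1) • a ^ kl.1) * (z⁻¹ ^ (kl.2 + 1) • a ^ kl.2)
        = ((n + 1) * z⁻¹ ^ (n + 2)) • a ^ n := by
    intro n
    rw [Finset.sum_congr rfl fun kl hkl => (show _ = z⁻¹ ^ (n + 2) • a ^ n by
      rw [smul_mul_smul_comm, ← pow_add, ← pow_add,
        ← Finset.HasAntidiagonal.mem_antidiagonal.mp hkl]
      ring_nf), Finset.sum_const, Finset.Nat.card_antidiagonal, ← Nat.cast_smul_eq_nsmul ℂ,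
      smul_smul]
    push_cast
    ring_nf
  have hnorm2 := summable_norm_sum_mul_antidiagonal_of_summable_norm hnorm hnorm
  simp only [hanti] at hnorm2
  refine ⟨?_, hnorm2⟩
  rw [sq, ← hsum.tsum_eq, tsum_mul_tsum_eq_tsum_sum_antidiagonal_of_summable_norm hnorm hnorm]
  simp only [hanti]
  exact hnorm2.of_norm.hasSum

theorem continuous_resolvent_circleMap_s12 {a : A} {r : ℝ}
    (hr : spectralRadius ℂ a < ENNReal.ofReal r) :
    Continuous fun t => resolvent a (circleMap 0 r t) :=
  continuous_iff_continuousAt.mpr fun t =>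
    (spectrum.hasDerivAt_resolvent_const_left (spectrum.mem_resolventSet_of_spectralRadius_lt
      (spectralRadius_lt_nnnorm_circleMap hr t))).continuousAt.comp
      (continuous_circleMap 0 r).continuousAt

theorem integral_circleMap_pow_smul_resolvent_sq {a : A} {r : ℝ}
    (hr : spectralRadius ℂ a < ENNReal.ofReal r) (n : ℕ) :
    ∫ t in (0 : ℝ)..2 * π, circleMap 0 r t ^ (n + 2) • resolvent a (circleMap 0 r t) ^ 2
      = (2 * π * (n + 1) : ℂ) • a ^ n := by
  have hr0 : (r : ℂ) ≠ 0 :=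
    ofReal_ne_zero.mpr (ENNReal.ofReal_pos.mp ((zero_le (α := ℝ≥0∞)).trans_lt hr)).ne'
  set b : ℕ → A := fun k => (r : ℂ) ^ (n + 2) • (((k + 1) * (r : ℂ)⁻¹ ^ (k + 2)) • a ^ k)
  have hb : Summable fun k => ‖b k‖ := by
    have := (hasSum_resolvent_sq (spectralRadius_lt_nnnorm_circleMap hr 0)).2
    simp only [circleMap_zero, ofReal_zero, zero_mul, exp_zero, mul_one] at this
    simpa only [b, norm_smul] using this.mul_left ‖(r : ℂ) ^ (n + 2)‖
  have hf : ∀ t : ℝ, HasSum (fun k : ℕ => exp (((n : ℤ) - k : ℤ) * t * I) • b k)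
      (circleMap 0 r t ^ (n + 2) • resolvent a (circleMap 0 r t) ^ 2) := by
    intro t
    convert (hasSum_resolvent_sq (spectralRadius_lt_nnnorm_circleMap hr t)).1.const_smul
      (circleMap 0 r t ^ (n + 2)) using 1
    funext k
    have he : exp (((n : ℤ) - k : ℤ) * t * I)
        = exp (t * I) ^ (n + 2) * (exp (t * I))⁻¹ ^ (k + 2) := by
      rw [← exp_nat_mul, ← exp_neg, ← exp_nat_mul, ← exp_add]
      push_cast
      ring_nf
    simp only [b, smul_smul]
    rw [he, circleMap_zero]
    ring_nf
  have hsingle : HasSum (fun k : ℕ => if ((n : ℤ) - k : ℤ) = 0 then (2 * π : ℂ) • b k else 0)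
      ((2 * π : ℂ) • b n) := by
    convert hasSum_ite_eq n ((2 * π : ℂ) • b n) using 2 with k
    by_cases h : k = n
    · simp [h]
    · have : (n : ℤ) - k ≠ 0 := by omega
      simp [h, this]
  rw [(hasSum_integral_of_hasSum_exp_smul hb hf).unique hsingle]
  simp only [b, smul_smul, inv_pow]
  congr 1
  field_simp

end ResolventSeries

section Hilbert

variable {H : Type*} [NormedAddCommGroup H] [InnerProductSpace ℂ H]

theorem integral_norm_sq_le_of_hasSum_exp_smul {v : ℕ → H} {m : ℕ → ℤ} {g : ℝ → H} {r K : ℝ}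
    (hr : 1 < r) (hm : Function.Injective m) (hv : ∀ k, ‖v k‖ ≤ K)
    (hg : ∀ t : ℝ, HasSum (fun k => exp (m k * t * I) • ((r : ℂ)⁻¹ ^ (k + 1) • v k)) (g t)) :
    ∫ t in (0 : ℝ)..2 * π, ‖g t‖ ^ 2 ≤ 2 * π * K ^ 2 / (r ^ 2 - 1) := by
  have hK : 0 ≤ K := (norm_nonneg _).trans (hv 0)
  have hnorm : ∀ k, ‖(r : ℂ)⁻¹ ^ (k + 1) • v k‖ ≤ r⁻¹ ^ (k + 1) * K := fun k => by
    rw [norm_smul, norm_pow, norm_inv, norm_real, Real.norm_of_nonneg (by linarith)]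
    gcongr
    exact hv k
  have hsum : Summable fun k => ‖(r : ℂ)⁻¹ ^ (k + 1) • v k‖ :=
    .of_nonneg_of_le (fun _ => norm_nonneg _) hnorm
      ((summable_geometric_of_lt_one (by positivity) (inv_lt_one_of_one_lt₀ hr)).comp_injective
        (add_left_injective 1) |>.mul_right K)
  refine hasSum_le (fun k => ?_) (hasSum_integral_norm_sq_of_hasSum_exp_smul hsum hm hg)
    (((hasSum_geometric_inv_sq_succ hr).mul_left (2 * π * K ^ 2)))
  calc 2 * π * ‖(r : ℂ)⁻¹ ^ (k + 1) • v k‖ ^ 2 ≤ 2 * π * (r⁻¹ ^ (k + 1) * K) ^ 2 := by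
        gcongr
        exact hnorm k
    _ = 2 * π * K ^ 2 * (r⁻¹ ^ (k + 1)) ^ 2 := by ring

variable [CompleteSpace H]

theorem integral_norm_inner_resolvent_sq_le {T : H →L[ℂ] H} (hT : spectralRadius ℂ T ≤ 1)
    {M : ℝ} (hM : ∀ n, ‖T ^ n‖ ≤ M) {r : ℝ} (hr : 1 < r) (x y : H) :
    ∫ t in (0 : ℝ)..2 * π, ‖⟪(resolvent T (circleMap 0 r t) ^ 2) x, y⟫_ℂ‖
      ≤ 2 * π * M ^ 2 / (r ^ 2 - 1) * ‖x‖ * ‖y‖ := by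
  rcases eq_or_ne x 0 with rfl | hx
  · simp
  rcases eq_or_ne y 0 with rfl | hy
  · simp
  have hρ : spectralRadius ℂ T < ENNReal.ofReal r := hT.trans_lt (ENNReal.one_lt_ofReal.mpr hr)
  have hR : Continuous fun t => resolvent T (circleMap 0 r t) := continuous_resolvent_circleMap_s12 hρ
  have hseries := fun t => (hasSum_resolvent (spectralRadius_lt_nnnorm_circleMap hρ t)).1
  have hRx : ∀ t : ℝ, HasSum (fun k : ℕ => exp ((-(k + 1 : ℕ) : ℤ) * t * I) •
      ((r : ℂ)⁻¹ ^ (k + 1) • (T ^ k) x)) (resolvent T (circleMap 0 r t) x) := by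
    intro t
    simpa only [ContinuousLinearMap.apply_apply, smul_apply,
      circleMap_inv_pow, smul_smul] using (hseries t).mapL (ContinuousLinearMap.apply ℂ H x)
  have hRy : ∀ t : ℝ, HasSum (fun k : ℕ => exp (((k + 1 : ℕ) : ℤ) * t * I) •
      ((r : ℂ)⁻¹ ^ (k + 1) • (star T ^ k) y)) (star (resolvent T (circleMap 0 r t)) y) := by
    intro t
    simpa only [ContinuousLinearMap.apply_apply, smul_apply, star_smul,
      star_pow, Complex.star_def, conj_circleMap_inv_pow, smul_smul]
      using (hseries t).star.mapL (ContinuousLinearMap.apply ℂ H y)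
  have hx2 := integral_norm_sq_le_of_hasSum_exp_smul hr (fun j k h => by simpa using h)
    (fun k => ((T ^ k).le_opNorm x).trans (mul_le_mul_of_nonneg_right (hM k) (norm_nonneg x))) hRx
  have hy2 := integral_norm_sq_le_of_hasSum_exp_smul hr (fun j k h => by simpa using h)
    (fun k => ((star T ^ k).le_opNorm y).trans
      (by rw [← star_pow, norm_star]; exact mul_le_mul_of_nonneg_right (hM k) (norm_nonneg y)))
    hRy
  calc ∫ t in (0 : ℝ)..2 * π, ‖⟪(resolvent T (circleMap 0 r t) ^ 2) x, y⟫_ℂ‖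
      ≤ ∫ t in (0 : ℝ)..2 * π,
          ‖resolvent T (circleMap 0 r t) x‖ * ‖star (resolvent T (circleMap 0 r t)) y‖ := by
        refine intervalIntegral.integral_mono_on (by positivity)
          (Continuous.intervalIntegrable (by fun_prop) _ _)
          (Continuous.intervalIntegrable (by fun_prop) _ _) fun t _ => ?_
        rw [sq, mul_apply_eq_comp, ContinuousLinearMap.star_eq_adjoint,
          ← ContinuousLinearMap.adjoint_inner_right]
        exact norm_inner_le_norm _ _
    _ ≤ 2 * π * M ^ 2 / (r ^ 2 - 1) * ‖x‖ * ‖y‖ :=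
        integral_mul_le_of_integral_sq_le (by positivity) (by fun_prop) (by fun_prop)
          (norm_pos_iff.mpr hx) (norm_pos_iff.mpr hy) (hx2.trans_eq (by ring))
          (hy2.trans_eq (by ring))

theorem two_pi_mul_norm_inner_pow_le {T : H →L[ℂ] H} {r : ℝ}
    (hr : spectralRadius ℂ T < ENNReal.ofReal r) (n : ℕ) (x y : H) :
    2 * π * (n + 1) * ‖⟪(T ^ n) x, y⟫_ℂ‖
      ≤ r ^ (n + 2) * ∫ t in (0 : ℝ)..2 * π, ‖⟪(resolvent T (circleMap 0 r t) ^ 2) x, y⟫_ℂ‖ := by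
  have hr0 : 0 < r := ENNReal.ofReal_pos.mp ((zero_le (α := ℝ≥0∞)).trans_lt hr)
  let L : (H →L[ℂ] H) →L[ℂ] ℂ := (innerSL ℂ y).comp (ContinuousLinearMap.apply ℂ H x)
  have hL : ∀ (c : ℂ) (S : H →L[ℂ] H), ‖L (c • S)‖ = ‖c‖ * ‖⟪S x, y⟫_ℂ‖ := fun c S => by
    simp [L, norm_inner_symm]
  have hcont :
      Continuous fun t => circleMap 0 r t ^ (n + 2) • resolvent T (circleMap 0 r t) ^ 2 := by
    have := continuous_resolvent_circleMap_s12 hr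
    fun_prop
  have hcomm := L.intervalIntegral_comp_comm (hcont.intervalIntegrable (μ := volume) 0 (2 * π))
  rw [integral_circleMap_pow_smul_resolvent_sq hr n] at hcomm
  calc 2 * π * (n + 1) * ‖⟪(T ^ n) x, y⟫_ℂ‖
      = ‖L ((2 * π * (n + 1) : ℂ) • T ^ n)‖ := by
        rw [hL, show (2 * π * (n + 1) : ℂ) = ((2 * π * (n + 1) : ℝ) : ℂ) by push_cast; rfl,
          norm_real, Real.norm_of_nonneg (by positivity)]
    _ ≤ ∫ t in (0 : ℝ)..2 * π,
          ‖L (circleMap 0 r t ^ (n + 2) • resolvent T (circleMap 0 r t) ^ 2)‖ := by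
        rw [← hcomm]
        exact intervalIntegral.norm_integral_le_integral_norm (by positivity)
    _ = r ^ (n + 2) * ∫ t in (0 : ℝ)..2 * π, ‖⟪(resolvent T (circleMap 0 r t) ^ 2) x, y⟫_ℂ‖ := by
        simp only [hL, norm_pow, norm_circleMap_zero, abs_of_pos hr0]
        exact intervalIntegral.integral_const_mul _ _

theorem norm_pow_le_of_integral_norm_inner_resolvent_sq_le {T : H →L[ℂ] H}
    (hT : spectralRadius ℂ T ≤ 1) {C : ℝ} (hC : 0 ≤ C)
    (h : ∀ r : ℝ, 1 < r → ∀ x y : H,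
      ∫ t in (0 : ℝ)..2 * π, ‖⟪(resolvent T (circleMap 0 r t) ^ 2) x, y⟫_ℂ‖
        ≤ C / (r ^ 2 - 1) * ‖x‖ * ‖y‖) (n : ℕ) :
    ‖T ^ n‖ ≤ C * Real.exp 2 / (4 * π) := by
  set r : ℝ := 1 + 1 / (n + 1) with hr_def
  have hr : 1 < r := by
    rw [hr_def]
    linarith [show (0 : ℝ) < 1 / (n + 1) by positivity]
  refine ContinuousLinearMap.opNorm_le_of_re_inner_le (by positivity) fun x y hx hy => ?_
  have key : (n + 1) * (2 * π * ‖⟪(T ^ n) x, y⟫_ℂ‖) ≤ (n + 1) * (C * Real.exp 2 / 2) := calc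
    _ = 2 * π * (n + 1) * ‖⟪(T ^ n) x, y⟫_ℂ‖ := by ring
    _ ≤ r ^ (n + 2) * ∫ t in (0 : ℝ)..2 * π, ‖⟪(resolvent T (circleMap 0 r t) ^ 2) x, y⟫_ℂ‖ :=
        two_pi_mul_norm_inner_pow_le (hT.trans_lt (ENNReal.one_lt_ofReal.mpr hr)) n x y
    _ ≤ r ^ (n + 2) * (C / (r ^ 2 - 1) * ‖x‖ * ‖y‖) := by
        gcongr
        exact h r hr x y
    _ = C * (r ^ (n + 2) / (r ^ 2 - 1)) := by rw [hx, hy]; ring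
    _ ≤ C * (Real.exp 2 * (n + 1) / 2) :=
        mul_le_mul_of_nonneg_left (one_add_inv_succ_pow_div_le n) hC
    _ = (n + 1) * (C * Real.exp 2 / 2) := by ring
  have key' := le_of_mul_le_mul_left key (by positivity)
  calc RCLike.re ⟪(T ^ n) x, y⟫_ℂ ≤ ‖⟪(T ^ n) x, y⟫_ℂ‖ := RCLike.re_le_norm _
    _ ≤ C * Real.exp 2 / (4 * π) := by
        rw [le_div_iff₀ (by positivity)]
        linarith

end Hilbert

/-- On a Hilbert space, an operator with spectrum in the closed unit disk is
power bounded if and only if it satisfies the discrete Gomilko–Shi–Feng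
condition `(GFS)₁`. -/
theorem stmt12 {H : Type*} [NormedAddCommGroup H] [InnerProductSpace ℂ H] [CompleteSpace H]
    (T : H →L[ℂ] H) (hσ : spectrum ℂ T ⊆ closedBall 0 1) :
    (∃ M : ℝ, ∀ n : ℕ, ‖T ^ n‖ ≤ M) ↔
    (∃ C : ℝ, 0 < C ∧ ∀ r : ℝ, 1 < r → ∀ x y : H,
      ∫ t in (0:ℝ)..(2*π),
          ‖(inner ℂ ((resolvent T ((r : ℂ) * exp (t * I)) ^ 2) x) y : ℂ)‖
        ≤ C / (r^2-1) * ‖x‖ * ‖y‖) := by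
  have hT : spectralRadius ℂ T ≤ 1 := iSup₂_le fun z hz => by
    simpa [← NNReal.coe_le_one] using hσ hz
  simp only [← circleMap_zero]
  constructor
  · rintro ⟨M, hM⟩
    exact ⟨2 * π * max M 1 ^ 2, by positivity, fun r hr => integral_norm_inner_resolvent_sq_le hT
      (fun n => (hM n).trans (le_max_left M 1)) hr⟩
  · rintro ⟨C, hC, h⟩
    exact ⟨_, norm_pow_le_of_integral_norm_inner_resolvent_sq_le hT hC.le h⟩
end

section
/- Let U be the bilateral shift on ℓ^p(ℤ) for 1 < p < 2, defined by U((x_n)_{n∈ℤ}) = (x_{n+1})_{n∈ℤ}, and let δ₀ be the standard basis vector at 0. Then ‖(Σ_{i=1}^n |U^{i−1}δ₀|²)^{1/2}‖_{ℓ^p} = n^{1/p} while ‖(Σ_{i=1}^n |δ₀|²)^{1/2}‖_{ℓ^p} = n^{1/2}; consequently the set {Uⁿ : n ∈ ℕ} is not R-bounded (equivalently not γ-bounded) on ℓ^p(ℤ) when p ≠ 2. -/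
open scoped ENNReal

lemma aux_norm19 (p : ℝ≥0∞) [Fact (1 ≤ p)] (hpr : 0 < p.toReal)
    (s : lp (fun _ : ℤ => ℂ) p) (S : Finset ℤ) (c : ℝ) (hc : 0 ≤ c)
    (hs : ∀ k : ℤ, s k = if k ∈ S then (c : ℂ) else 0) :
    ‖s‖ = (S.card : ℝ) ^ (1 / p.toReal) * c := by
  rw [lp.norm_eq_tsum_rpow hpr]
  have h1 : ∀ k : ℤ, ‖s k‖ ^ p.toReal = if k ∈ S then c ^ p.toReal else 0 := by
    intro k
    rw [hs k]
    split
    · simp [Complex.norm_real, abs_of_nonneg hc]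
    · simp [Real.zero_rpow hpr.ne']
  have h2 : (∑' k : ℤ, ‖s k‖ ^ p.toReal) = S.card * c ^ p.toReal := by
    rw [tsum_eq_sum (s := S) (fun k hk => by rw [h1 k, if_neg hk])]
    simp only [h1]
    rw [Finset.sum_ite_mem, Finset.inter_self, Finset.sum_const, nsmul_eq_mul]
  rw [h2, Real.mul_rpow (by positivity) (by positivity), ← Real.rpow_mul hc,
    mul_one_div, div_self hpr.ne', Real.rpow_one]

/-- The bilateral shift `U` on `ℓ^p(ℤ)`, `1 < p < 2`, satisfies
`‖(Σ_{i=1}^n |U^{i−1}δ₀|²)^{1/2}‖_p = n^{1/p}` while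
`‖(Σ_{i=1}^n |δ₀|²)^{1/2}‖_p = n^{1/2}`; consequently the set `{Uⁿ : n ∈ ℕ}`
satisfies no square-function estimate, i.e. it is not R-bounded
(equivalently, not γ-bounded). -/
theorem stmt19 (p : ℝ≥0∞) [Fact (1 ≤ p)] (hp1 : 1 < p) (hp2 : p < 2)
    (U : lp (fun _ : ℤ => ℂ) p →L[ℂ] lp (fun _ : ℤ => ℂ) p)
    (hU : ∀ (x : lp (fun _ : ℤ => ℂ) p) (k : ℤ), (U x) k = x (k+1))
    (δ₀ : lp (fun _ : ℤ => ℂ) p)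
    (hδ : ∀ k : ℤ, δ₀ k = if k = 0 then 1 else 0) :
    (∀ n : ℕ, 1 ≤ n → ∀ s : lp (fun _ : ℤ => ℂ) p,
      (∀ k : ℤ, s k = (((∑ i ∈ Finset.range n, ‖(U^i) δ₀ k‖^2 : ℝ) ^ ((1:ℝ)/2) : ℝ) : ℂ)) →
      ‖s‖ = (n : ℝ) ^ (1 / p.toReal))
    ∧ (∀ n : ℕ, 1 ≤ n → ∀ s : lp (fun _ : ℤ => ℂ) p,
      (∀ k : ℤ, s k = (((∑ _i ∈ Finset.range n, ‖δ₀ k‖^2 : ℝ) ^ ((1:ℝ)/2) : ℝ) : ℂ)) →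
      ‖s‖ = (n : ℝ) ^ ((1:ℝ)/2))
    ∧ ¬ ∃ Cb : ℝ, ∀ (n : ℕ) (ms : Fin n → ℕ) (x : Fin n → lp (fun _ : ℤ => ℂ) p)
        (sL sR : lp (fun _ : ℤ => ℂ) p),
        (∀ k : ℤ, sL k = (((∑ i, ‖(U^(ms i)) (x i) k‖^2 : ℝ) ^ ((1:ℝ)/2) : ℝ) : ℂ)) →
        (∀ k : ℤ, sR k = (((∑ i, ‖x i k‖^2 : ℝ) ^ ((1:ℝ)/2) : ℝ) : ℂ)) →
        ‖sL‖ ≤ Cb * ‖sR‖ := by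
  have hpt : p ≠ ⊤ := hp2.ne_top
  have hpr1 : 1 < p.toReal := by
    have := (ENNReal.toReal_lt_toReal ENNReal.one_ne_top hpt).mpr hp1
    simpa using this
  have hpr2 : p.toReal < 2 := by
    have := (ENNReal.toReal_lt_toReal hpt ENNReal.ofNat_ne_top).mpr hp2
    simpa using this
  have hpr0 : 0 < p.toReal := lt_trans one_pos hpr1
  -- pow action
  have hpow : ∀ (i : ℕ) (x : lp (fun _ : ℤ => ℂ) p) (k : ℤ), ((U^i) x) k = x (k + i) := by
    intro i
    induction i with
    | zero => intro x k; simp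
    | succ i ih =>
      intro x k
      rw [pow_succ', ContinuousLinearMap.mul_apply, hU, ih]
      push_cast
      ring_nf
  have hUδ : ∀ (i : ℕ) (k : ℤ), ((U^i) δ₀) k = if k = -(i:ℤ) then 1 else 0 := by
    intro i k
    rw [hpow i δ₀ k, hδ]
    split_ifs with h1 h2 h2 <;> first | rfl | omega
  -- the support finset
  set S : ℕ → Finset ℤ := fun n => (Finset.range n).image (fun i : ℕ => -(i:ℤ)) with hS
  have hinj : Function.Injective (fun i : ℕ => -(i:ℤ)) := by
    intro a b hab; simpa using hab
  have hScard : ∀ n, (S n).card = n := by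
    intro n
    rw [hS, Finset.card_image_of_injective _ hinj, Finset.card_range]
  have hsum : ∀ (n : ℕ) (k : ℤ),
      (∑ i ∈ Finset.range n, ‖((U^i) δ₀) k‖^2 : ℝ) = if k ∈ S n then 1 else 0 := by
    intro n k
    have hterm : ∀ i ∈ Finset.range n,
        (‖((U^i) δ₀) k‖^2 : ℝ) = if k = -(i:ℤ) then (1:ℝ) else 0 := by
      intro i _
      rw [hUδ]
      split_ifs with h <;> simp [h]
    have himg : ∑ j ∈ S n, (if k = j then (1:ℝ) else 0)
        = ∑ i ∈ Finset.range n, (if k = -(i:ℤ) then (1:ℝ) else 0) :=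
      Finset.sum_image (fun a _ b _ h => hinj h)
    rw [Finset.sum_congr rfl hterm, ← himg, Finset.sum_ite_eq]
  have hval1 : ∀ (n : ℕ) (k : ℤ),
      ((∑ i ∈ Finset.range n, ‖((U^i) δ₀) k‖^2 : ℝ) ^ ((1:ℝ)/2) : ℝ)
        = if k ∈ S n then 1 else 0 := by
    intro n k
    rw [hsum]
    split_ifs
    · exact Real.one_rpow _
    · exact Real.zero_rpow (by norm_num)
  -- Part 1
  have part1 : ∀ n : ℕ, 1 ≤ n → ∀ s : lp (fun _ : ℤ => ℂ) p,
      (∀ k : ℤ, s k = (((∑ i ∈ Finset.range n, ‖(U^i) δ₀ k‖^2 : ℝ) ^ ((1:ℝ)/2) : ℝ) : ℂ)) →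
      ‖s‖ = (n : ℝ) ^ (1 / p.toReal) := by
    intro n _ s hs
    have := aux_norm19 p hpr0 s (S n) 1 one_pos.le (fun k => by
      rw [hs k, hval1]
      split_ifs <;> norm_num)
    rw [this, hScard, mul_one]
  -- Part 2
  have hval2 : ∀ (n : ℕ) (k : ℤ),
      ((∑ _i ∈ Finset.range n, ‖δ₀ k‖^2 : ℝ) ^ ((1:ℝ)/2) : ℝ)
        = if k ∈ ({0} : Finset ℤ) then ((n:ℝ) ^ ((1:ℝ)/2)) else 0 := by
    intro n k
    rw [Finset.sum_const, Finset.card_range, nsmul_eq_mul, hδ]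
    by_cases h : k = 0
    · simp [h]
    · rw [if_neg h, if_neg (show k ∉ ({0}:Finset ℤ) by simpa using h), norm_zero,
        show ((n:ℝ) * 0 ^ 2 : ℝ) = 0 by ring]
      exact Real.zero_rpow (by norm_num)
  have part2 : ∀ n : ℕ, 1 ≤ n → ∀ s : lp (fun _ : ℤ => ℂ) p,
      (∀ k : ℤ, s k = (((∑ _i ∈ Finset.range n, ‖δ₀ k‖^2 : ℝ) ^ ((1:ℝ)/2) : ℝ) : ℂ)) →
      ‖s‖ = (n : ℝ) ^ ((1:ℝ)/2) := by
    intro n _ s hs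
    have := aux_norm19 p hpr0 s ({0} : Finset ℤ) ((n:ℝ) ^ ((1:ℝ)/2)) (by positivity)
      (fun k => by rw [hs k, hval2]; split_ifs <;> norm_num)
    rw [this]
    simp
  refine ⟨part1, part2, ?_⟩
  -- Part 3
  rintro ⟨Cb, hCb⟩
  have hmem : ∀ (f : ℤ → ℂ) (T : Finset ℤ), (∀ k ∉ T, f k = 0) → Memℓp f p := by
    intro f T hT
    exact memℓp_gen (summable_of_ne_finset_zero (s := T) (fun k hk => by
      rw [hT k hk]; simp [Real.zero_rpow hpr0.ne']))
  have key : ∀ n : ℕ, 1 ≤ n → (n : ℝ) ^ (1 / p.toReal) ≤ Cb * (n : ℝ) ^ ((1:ℝ)/2) := by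
    intro n hn
    set sL : lp (fun _ : ℤ => ℂ) p :=
      ⟨fun k => if k ∈ S n then (1:ℂ) else 0,
        hmem _ (S n) (fun k hk => if_neg hk)⟩ with hsL
    set sR : lp (fun _ : ℤ => ℂ) p :=
      ⟨fun k => if k ∈ ({0} : Finset ℤ) then (((n:ℝ) ^ ((1:ℝ)/2) : ℝ) : ℂ) else 0,
        hmem _ {0} (fun k hk => if_neg hk)⟩ with hsR
    have hsLval : ∀ k : ℤ, sL k = (((∑ i ∈ Finset.range n, ‖(U^i) δ₀ k‖^2 : ℝ) ^ ((1:ℝ)/2) : ℝ) : ℂ) := by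
      intro k
      rw [hval1]
      show (if k ∈ S n then (1:ℂ) else 0) = _
      split_ifs <;> norm_num
    have hsRval : ∀ k : ℤ, sR k = (((∑ _i ∈ Finset.range n, ‖δ₀ k‖^2 : ℝ) ^ ((1:ℝ)/2) : ℝ) : ℂ) := by
      intro k
      rw [hval2]
      show (if k ∈ ({0} : Finset ℤ) then (((n:ℝ) ^ ((1:ℝ)/2) : ℝ) : ℂ) else 0) = _
      split_ifs <;> norm_num
    have hineq := hCb n (fun i => (i : ℕ)) (fun _ => δ₀) sL sR
      (fun k => by rw [Fin.sum_univ_eq_sum_range (fun i => ‖(U^i) δ₀ k‖^2)]; exact hsLval k)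
      (fun k => by
        rw [Fin.sum_univ_eq_sum_range (fun _ => ‖δ₀ k‖^2)]; exact hsRval k)
    rwa [part1 n hn sL hsLval, part2 n hn sR hsRval] at hineq
  have hCb1 : 1 ≤ Cb := by
    have := key 1 le_rfl
    simpa using this
  have hhalf_lt : 1 / 2 < 1 / p.toReal := by
    rw [div_lt_div_iff₀ (by norm_num) hpr0]
    linarith
  set ε : ℝ := 1 / p.toReal - 1 / 2 with hε
  have hε0 : 0 < ε := by rw [hε]; linarith
  set N : ℕ := ⌈(Cb + 1) ^ (1 / ε)⌉₊ + 1 with hN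
  have hN1 : 1 ≤ N := Nat.le_add_left 1 _
  have hNge : (Cb + 1) ^ (1 / ε) ≤ (N : ℝ) := by
    calc (Cb + 1) ^ (1 / ε) ≤ (⌈(Cb + 1) ^ (1 / ε)⌉₊ : ℝ) := Nat.le_ceil _
    _ ≤ (N : ℝ) := by exact_mod_cast Nat.le_succ _
  have hNpos : (0 : ℝ) < N := by positivity
  have hNε : Cb + 1 ≤ (N : ℝ) ^ ε := by
    calc Cb + 1 = ((Cb + 1) ^ (1 / ε)) ^ ε := by
          rw [← Real.rpow_mul (by linarith), one_div_mul_cancel hε0.ne', Real.rpow_one]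
    _ ≤ (N : ℝ) ^ ε := Real.rpow_le_rpow (by positivity) hNge hε0.le
  have hkeyN := key N hN1
  have hsplit : (N : ℝ) ^ (1 / p.toReal) = (N : ℝ) ^ ε * (N : ℝ) ^ ((1:ℝ)/2) := by
    rw [← Real.rpow_add hNpos, hε]
    ring_nf
  rw [hsplit] at hkeyN
  have hhalf : (0 : ℝ) < (N : ℝ) ^ ((1:ℝ)/2) := Real.rpow_pos_of_pos hNpos _
  have : (N : ℝ) ^ ε ≤ Cb := le_of_mul_le_mul_right hkeyN hhalf
  linarith
end
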